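/- arXiv:2002.04901 — 8 statements merged into one kernel-verified Lean document; each statement's English description precedes it below -/
import Mathlib

section
/- An element a of a commutative ring A is weakly proregular (i.e., the inverse system of Koszul cohomologies H^{-1}(K(A; a^i)) = Ann_A(a^i), with transition maps given by multiplication by powers of a, is pro-zero) if and only if A has bounded a-torsion, i.e., there exists j0 such that Ann_A(a^j) = Ann_A(a^{j0}) for all j ≥ j0. -/
/-!
An element `a` of a commutative ring `A` is weakly proregular (the inverse system of
Koszul cohomologies `H^{-1}(K(A; a^i)) = Ann_A(a^i)`, with transition maps
multiplication by `a^(j-i)`, is pro-zero) iff `A` has bounded `a`-torsion.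
-/

theorem element_weakly_proregular_iff_bounded_torsion
    {A : Type*} [CommRing A] (a : A) :
    (∀ i : ℕ, ∃ j : ℕ, i ≤ j ∧ ∀ x : A, a ^ j * x = 0 → a ^ (j - i) * x = 0) ↔
    (∃ j0 : ℕ, ∀ j : ℕ, j0 ≤ j → ∀ x : A, a ^ j * x = 0 ↔ a ^ j0 * x = 0) := by
  constructor
  · rintro h
    obtain ⟨j, hj1, hj⟩ := h 1
    -- Ann(a^j) ⊆ Ann(a^(j-1)), hence annihilators stabilize at j
    refine ⟨j, fun m hm x => ?_⟩
    constructor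
    · intro hx
      obtain ⟨k, rfl⟩ := Nat.exists_eq_add_of_le hm
      induction k with
      | zero => simpa using hx
      | succ n ih =>
        apply ih (by omega)
        have h1 : a ^ j * (a ^ (n + 1) * x) = 0 := by
          rw [← mul_assoc, ← pow_add]
          exact hx
        have h2 := hj _ h1
        rw [← mul_assoc, ← pow_add] at h2
        rwa [show j - 1 + (n + 1) = j + n from by omega] at h2
    · intro hx
      obtain ⟨k, rfl⟩ := Nat.exists_eq_add_of_le hm
      rw [add_comm, pow_add, mul_assoc, hx, mul_zero]
  · rintro ⟨j0, hj0⟩ i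
    refine ⟨j0 + i, by omega, fun x hx => ?_⟩
    rw [show j0 + i - i = j0 from by omega]
    exact (hj0 (j0 + i) (by omega) x).mp hx
end

section
/- If a is a regular element of a commutative ring A (a non-zero-divisor) and A/(a) has bounded b-torsion with torsion bound l, then for every k ≥ 0 the ring A_k := A/(a^{k+1}) has bounded b-torsion, with torsion bound at most (k+1)·l. -/
/-!
If `a` is a regular element of a commutative ring `A` and `A/(a)` has bounded
`b`-torsion with torsion bound `l`, then for every `k ≥ 0` the ring
`A_k := A/(a^(k+1))` has bounded `b`-torsion, with torsion bound at most `(k+1)·l`.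

Here "`l` is a torsion bound for `b` on `M`" means `Ann_M(b^j) = Ann_M(b^l)` for all
`j ≥ l`; since the annihilators increase, this is equivalent to
`b^j * x = 0 → b^l * x = 0` for all `j ≥ l`.
-/

theorem bounded_torsion_of_quotients_of_powers
    {A : Type*} [CommRing A] (a b : A) (l : ℕ)
    (ha : ∀ x : A, a * x = 0 → x = 0)
    (hl : ∀ j : ℕ, l ≤ j → ∀ x : A ⧸ Ideal.span {a},
      (Ideal.Quotient.mk (Ideal.span {a}) b) ^ j * x = 0 →
      (Ideal.Quotient.mk (Ideal.span {a}) b) ^ l * x = 0) :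
    ∀ k : ℕ, ∀ j : ℕ, (k + 1) * l ≤ j → ∀ x : A ⧸ Ideal.span {a ^ (k + 1)},
      (Ideal.Quotient.mk (Ideal.span {a ^ (k + 1)}) b) ^ j * x = 0 →
      (Ideal.Quotient.mk (Ideal.span {a ^ (k + 1)}) b) ^ ((k + 1) * l) * x = 0 := by
  have hl' : ∀ j : ℕ, l ≤ j → ∀ x : A, a ∣ b ^ j * x → a ∣ b ^ l * x := by
    intro j hj x hx
    have h := hl j hj (Ideal.Quotient.mk _ x) ?_
    · rwa [← map_pow, ← map_mul, Ideal.Quotient.eq_zero_iff_mem,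
        Ideal.mem_span_singleton] at h
    · rw [← map_pow, ← map_mul, Ideal.Quotient.eq_zero_iff_mem,
        Ideal.mem_span_singleton]
      exact hx
  have key : ∀ k : ℕ, ∀ j : ℕ, (k + 1) * l ≤ j → ∀ x : A,
      a ^ (k + 1) ∣ b ^ j * x → a ^ (k + 1) ∣ b ^ ((k + 1) * l) * x := by
    intro k
    induction k with
    | zero =>
      intro j hj x hx
      simpa using hl' j (by simpa using hj) x (by simpa using hx)
    | succ k ih =>
      intro j hj x hx
      have hjl : l ≤ j := le_trans (Nat.le_mul_of_pos_left l (Nat.succ_pos _)) hj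
      have h1 : a ∣ b ^ j * x :=
        dvd_trans (dvd_pow_self a (Nat.succ_ne_zero _)) hx
      obtain ⟨y, hy⟩ := hl' j hjl x h1
      have h2 : a ^ (k + 2) ∣ a * (b ^ (j - l) * y) := by
        have heq : b ^ j * x = a * (b ^ (j - l) * y) := by
          calc b ^ j * x = b ^ (j - l) * (b ^ l * x) := by
                rw [← mul_assoc, ← pow_add]; congr 2; omega
            _ = a * (b ^ (j - l) * y) := by rw [hy]; ring
        rwa [← heq]
      have h3 : a ^ (k + 1) ∣ b ^ (j - l) * y := by
        obtain ⟨z, hz⟩ := h2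
        refine ⟨z, sub_eq_zero.mp (ha _ ?_)⟩
        rw [mul_sub]
        have : a * (b ^ (j - l) * y) = a * (a ^ (k + 1) * z) := by
          rw [hz]; ring
        rw [this]; ring
      have hj' : (k + 1) * l + l ≤ j := by
        calc (k + 1) * l + l = (k + 1 + 1) * l := by ring
          _ ≤ j := hj
      obtain ⟨w, hw⟩ := ih (j - l) (by omega) y h3
      refine ⟨w, ?_⟩
      have heq2 : b ^ ((k + 1 + 1) * l) * x = a * (b ^ ((k + 1) * l) * y) := by
        calc b ^ ((k + 1 + 1) * l) * x = b ^ ((k + 1) * l) * (b ^ l * x) := by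
              rw [← mul_assoc, ← pow_add]; congr 2; ring
          _ = a * (b ^ ((k + 1) * l) * y) := by rw [hy]; ring
      rw [heq2, hw]; ring
  intro k j hj x hx
  obtain ⟨x, rfl⟩ := Ideal.Quotient.mk_surjective x
  rw [← map_pow, ← map_mul, Ideal.Quotient.eq_zero_iff_mem,
    Ideal.mem_span_singleton] at hx ⊢
  exact key k j hj x hx
end

section
/- Let A be a commutative ring, a a regular element of A, and b ∈ A such that the image of b in A/(a) is a weakly proregular element. Then the length-2 sequence (a, b) in A is weakly proregular, i.e., for q = -1 and q = -2, the inverse system {H^q(K(A; a^i, b^i))} of Koszul cohomologies is pro-zero. -/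
private theorem pow_cancel {A : Type*} [CommRing A] (a : A)
    (ha : ∀ x : A, a * x = 0 → x = 0) :
    ∀ n : ℕ, ∀ x : A, a ^ n * x = 0 → x = 0 := by
  intro n
  induction n with
  | zero => intro x hx; simpa using hx
  | succ n ih =>
      intro x hx
      refine ih x (ha _ ?_)
      rw [show a * (a ^ n * x) = a ^ (n + 1) * x by ring, hx]

private theorem cancel_eq {A : Type*} [CommRing A] {a : A}
    (ha : ∀ x : A, a * x = 0 → x = 0) {u v : A} (h : a * u = a * v) : u = v := by
  have := ha (u - v) (by rw [mul_sub, h, sub_self])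
  exact sub_eq_zero.mp this

private theorem key {A : Type*} [CommRing A] (a b : A)
    (ha : ∀ x : A, a * x = 0 → x = 0)
    (hb : ∀ i : ℕ, ∃ j : ℕ, i ≤ j ∧ ∀ x : A,
      b ^ j * x ∈ Ideal.span {a} → b ^ (j - i) * x ∈ Ideal.span {a})
    (i : ℕ) : ∀ k : ℕ, ∃ j : ℕ, i ≤ j ∧ ∀ y u : A,
      b ^ j * y = a ^ j * u → ∃ w : A, b ^ (j - i) * y = a ^ k * w := by
  intro k
  induction k with
  | zero =>
      exact ⟨i, le_refl i, fun y u _ => ⟨b ^ (i - i) * y, by simp⟩⟩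
  | succ k ih =>
      obtain ⟨j, hij, hj⟩ := ih
      obtain ⟨n, hn1, hnb⟩ := hb (j + 1)
      refine ⟨n, le_trans hij (le_trans (Nat.le_succ j) hn1), fun y u hyu => ?_⟩
      obtain ⟨d, rfl⟩ := Nat.exists_eq_add_of_le hij
      obtain ⟨e, rfl⟩ := Nat.exists_eq_add_of_le hn1
      -- n = (i + d) + 1 + e
      have h1 : b ^ (i + d + 1 + e) * y ∈ Ideal.span {a} := by
        rw [Ideal.mem_span_singleton]
        exact ⟨a ^ (i + d + e) * u, by rw [hyu]; ring⟩
      have h2 := hnb y h1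
      rw [Ideal.mem_span_singleton, show i + d + 1 + e - (i + d + 1) = e by omega] at h2
      obtain ⟨y', hy'⟩ := h2
      -- b ^ e * y = a * y'
      have h3 : a * (b ^ (i + d + 1) * y') = a * (a ^ (i + d + e) * u) := by
        have hh : b ^ (i + d + 1) * (b ^ e * y) = a ^ (i + d + 1 + e) * u := by
          rw [show b ^ (i + d + 1) * (b ^ e * y) = b ^ (i + d + 1 + e) * y by ring, hyu]
        rw [hy'] at hh
        calc a * (b ^ (i + d + 1) * y') = b ^ (i + d + 1) * (a * y') := by ring
          _ = a ^ (i + d + 1 + e) * u := hh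
          _ = a * (a ^ (i + d + e) * u) := by ring
      have h4 : b ^ (i + d + 1) * y' = a ^ (i + d + e) * u := cancel_eq ha h3
      obtain ⟨w, hw⟩ := hj (b * y') (a ^ e * u)
        (by rw [show b ^ (i + d) * (b * y') = b ^ (i + d + 1) * y' by ring, h4]; ring)
      rw [show i + d - i = d by omega] at hw
      refine ⟨w, ?_⟩
      rw [show i + d + 1 + e - i = d + 1 + e by omega]
      calc b ^ (d + 1 + e) * y = b ^ (d + 1) * (b ^ e * y) := by ring
        _ = b ^ d * (b * y') * a := by rw [hy']; ring
        _ = a ^ k * w * a := by rw [hw]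
        _ = a ^ (k + 1) * w := by ring

theorem weakly_proregular_pair_of_regular_of_wpr_mod
    {A : Type*} [CommRing A] (a b : A)
    (ha : ∀ x : A, a * x = 0 → x = 0)
    (hb : ∀ i : ℕ, ∃ j : ℕ, i ≤ j ∧ ∀ x : A,
      b ^ j * x ∈ Ideal.span {a} → b ^ (j - i) * x ∈ Ideal.span {a}) :
    (∀ i : ℕ, ∃ j : ℕ, i ≤ j ∧ ∀ z : A,
      a ^ j * z = 0 → b ^ j * z = 0 → (a * b) ^ (j - i) * z = 0) ∧
    (∀ i : ℕ, ∃ j : ℕ, i ≤ j ∧ ∀ x y : A,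
      a ^ j * x + b ^ j * y = 0 →
      ∃ z : A, a ^ (j - i) * x = b ^ i * z ∧ b ^ (j - i) * y = -(a ^ i * z)) := by
  constructor
  · intro i
    refine ⟨i + 1, Nat.le_succ i, fun z haz _ => ?_⟩
    rw [pow_cancel a ha (i + 1) z haz, mul_zero]
  · intro i
    obtain ⟨j, hij, hj⟩ := key a b ha hb i i
    refine ⟨j, hij, fun x y hxy => ?_⟩
    obtain ⟨d, rfl⟩ := Nat.exists_eq_add_of_le hij
    obtain ⟨w, hw⟩ := hj y (-x) (by rw [mul_neg, eq_neg_iff_add_eq_zero, add_comm]; exact hxy)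
    rw [show i + d - i = d by omega] at hw ⊢
    refine ⟨-w, ?_, by rw [hw]; ring⟩
    have : a ^ i * (a ^ d * x - b ^ i * (-w)) = 0 := by
      have h1 : b ^ i * (b ^ d * y) = b ^ i * (a ^ i * w) := by rw [hw]
      calc a ^ i * (a ^ d * x - b ^ i * (-w)) = a ^ (i + d) * x + b ^ i * (a ^ i * w) := by ring
        _ = a ^ (i + d) * x + b ^ i * (b ^ d * y) := by rw [h1]
        _ = a ^ (i + d) * x + b ^ (i + d) * y := by ring
        _ = 0 := hxy
    have h0 := pow_cancel a ha i _ this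
    exact sub_eq_zero.mp h0
end

section
/- If A → B is a flat ring homomorphism and (a_1,...,a_n) is a weakly proregular sequence in A, then the image sequence (g(a_1),...,g(a_n)) in B is weakly proregular. -/
/-!
We use an explicit model for the Koszul complex `K(A; aa)` of a finite sequence
`aa = (a_1, ..., a_n)` in a commutative ring `A`: the degree `-q` component is the
free module of functions on the `q`-element subsets of `Fin n` (corresponding to the
basis of `Λ^q(A^n)`), and the differential is contraction against `aa` with the usual
signs.  The transition map `μ_{j,i} : K(A; aa^j) → K(A; aa^i)` multiplies the
component indexed by a subset `s` by `∏_{k ∈ s} a_k^(j-i)`.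

A sequence is weakly proregular if for every `q < 0` the inverse system
`{H^q(K(A; aa^i))}` is pro-zero: for every `i` there is `j ≥ i` such that the
transition map `H^q(K(A; aa^j)) → H^q(K(A; aa^i))` is zero, i.e. every degree `-q`
cocycle at level `j` is sent by `μ_{j,i}` to a coboundary at level `i`.
-/

/-- The degree `-q` component of the Koszul complex on `n` elements. -/
abbrev KoszulDeg (A : Type*) (n q : ℕ) : Type _ :=
  {s : Finset (Fin n) // s.card = q} → A

/-- The Koszul differential `K(A; aa)^{-(q+1)} → K(A; aa)^{-q}`, given by contraction
against the sequence `aa`, with the usual signs. -/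
noncomputable def koszulD {A : Type*} [CommRing A] {n : ℕ} (aa : Fin n → A) (q : ℕ)
    (f : KoszulDeg A n (q + 1)) : KoszulDeg A n q :=
  fun s => ∑ i ∈ (s.val)ᶜ.attach,
    (-1 : A) ^ (s.val.filter (fun k => k < i.val)).card * aa i.val *
      f ⟨insert i.val s.val, by
        rw [Finset.card_insert_of_notMem (Finset.mem_compl.mp i.property), s.property]⟩

/-- The transition map `μ_{j,i}` of the inverse system of Koszul complexes, in degree
`-q`, for exponents `j ≥ i` with `e = j - i`: multiplication by `∏_{k ∈ s} a_k^e` on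
the component indexed by the subset `s`. -/
noncomputable def koszulTransition {A : Type*} [CommRing A] {n : ℕ} (aa : Fin n → A)
    (e q : ℕ) (f : KoszulDeg A n q) : KoszulDeg A n q :=
  fun s => (∏ k ∈ s.val, aa k ^ e) * f s

/-- A finite sequence `aa` in a commutative ring `A` is weakly proregular if for every
`q < 0` the inverse system of Koszul cohomologies `{H^q(K(A; aa^i))}_{i ∈ ℕ}` is
pro-zero: for each `i` there is `j ≥ i` such that every cocycle of `K(A; aa^j)` in
degree `q` becomes a coboundary in `K(A; aa^i)` after applying `μ_{j,i}`. -/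
def IsWeaklyProregular {A : Type*} [CommRing A] {n : ℕ} (aa : Fin n → A) : Prop :=
  ∀ q i : ℕ, ∃ j : ℕ, i ≤ j ∧ ∀ f : KoszulDeg A n (q + 1),
    koszulD (fun k => aa k ^ j) q f = 0 →
    ∃ g : KoszulDeg A n (q + 2),
      koszulD (fun k => aa k ^ i) (q + 1) g = koszulTransition aa (j - i) (q + 1) f

/-- An ideal is weakly proregular if it is generated by a weakly proregular finite
sequence. -/
def Ideal.IsWeaklyProregular {A : Type*} [CommRing A] (I : Ideal A) : Prop :=
  ∃ (n : ℕ) (aa : Fin n → A), Ideal.span (Set.range aa) = I ∧ _root_.IsWeaklyProregular aa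

/-!
Weak proregularity asks that, for suitable `j ≥ i`, the transition map sends the kernel of the
level-`j` Koszul differential into the image of the level-`i` one. Base change along `A → B`
carries the Koszul complexes of `aa` to those of its image in `B`. Images are preserved by any
base change, and kernels by a flat one, so the inclusion survives.
-/

open TensorProduct LinearMap

section BaseChange

variable {A B M N P Q : Type*} [CommRing A] [CommRing B] [Algebra A B]
  [AddCommGroup M] [Module A M] [AddCommGroup N] [Module A N]
  [AddCommGroup P] [Module A P] [AddCommGroup Q] [Module A Q]

theorem LinearMap.range_baseChange_mono {f : M →ₗ[A] Q} {g : P →ₗ[A] Q} (H : range f ≤ range g) :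
    range (f.baseChange B) ≤ range (g.baseChange B) := by
  have hsurj : Function.Surjective (g.rangeRestrict.baseChange B) :=
    g.rangeRestrict.lTensor_surjective B g.surjective_rangeRestrict
  calc range (f.baseChange B)
      = range ((range g).subtype.baseChange B ∘ₗ
          (f.codRestrict (range g) fun x => H ⟨x, rfl⟩).baseChange B) := by
        rw [← baseChange_comp]; rfl
    _ ≤ range ((range g).subtype.baseChange B) := range_comp_le_range _ _
    _ = range (g.baseChange B) := by
        rw [← range_comp_of_range_eq_top _ (range_eq_top.mpr hsurj), ← baseChange_comp]; rfl

theorem Module.Flat.ker_baseChange_eq [Module.Flat A B] (f : M →ₗ[A] N) :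
    ker (f.baseChange B) = range ((ker f).subtype.baseChange B) :=
  Module.Flat.ker_lTensor_eq B B f

theorem Module.Flat.map_ker_baseChange_le_range_baseChange [Module.Flat A B] {f : M →ₗ[A] N}
    {g : P →ₗ[A] Q} {h : M →ₗ[A] Q} (H : (ker f).map h ≤ range g) :
    (ker (f.baseChange B)).map (h.baseChange B) ≤ range (g.baseChange B) := by
  rw [ker_baseChange_eq, ← range_comp, ← baseChange_comp]
  exact range_baseChange_mono (by rwa [range_comp, Submodule.range_subtype])

end BaseChange

theorem LinearEquiv.map_ker_arrowCongr_le_range_arrowCongr {R M N P Q M' N' P' Q' : Type*}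
    [CommSemiring R] [AddCommMonoid M] [Module R M] [AddCommMonoid N] [Module R N]
    [AddCommMonoid P] [Module R P] [AddCommMonoid Q] [Module R Q]
    [AddCommMonoid M'] [Module R M'] [AddCommMonoid N'] [Module R N']
    [AddCommMonoid P'] [Module R P'] [AddCommMonoid Q'] [Module R Q']
    (eM : M ≃ₗ[R] M') (eN : N ≃ₗ[R] N') (eP : P ≃ₗ[R] P') (eQ : Q ≃ₗ[R] Q')
    {f : M →ₗ[R] N} {g : P →ₗ[R] Q} {h : M →ₗ[R] Q} (H : (ker f).map h ≤ range g) :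
    (ker (eM.arrowCongr eN f)).map (eM.arrowCongr eQ h) ≤ range (eP.arrowCongr eQ g) := by
  rintro _ ⟨x, hx, rfl⟩
  obtain ⟨p, hp⟩ := H ⟨eM.symm x, by simpa using hx, rfl⟩
  exact ⟨eP p, by simp [hp]⟩

section Koszul

variable {A : Type*} [CommRing A] {n : ℕ}

noncomputable def koszulDₗ (a : Fin n → A) (q : ℕ) :
    KoszulDeg A n (q + 1) →ₗ[A] KoszulDeg A n q where
  toFun := koszulD a q
  map_add' f g := by
    funext s
    simp only [koszulD, Pi.add_apply, mul_add, Finset.sum_add_distrib]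
  map_smul' c f := by
    funext s
    simp only [koszulD, Pi.smul_apply, smul_eq_mul, RingHom.id_apply, Finset.mul_sum]
    exact Finset.sum_congr rfl fun i _ => by ring

noncomputable def koszulTransitionₗ (a : Fin n → A) (e q : ℕ) :
    KoszulDeg A n q →ₗ[A] KoszulDeg A n q where
  toFun := koszulTransition a e q
  map_add' f g := by
    funext s
    simp only [koszulTransition, Pi.add_apply, mul_add]
  map_smul' c f := by
    funext s
    simp only [koszulTransition, Pi.smul_apply, smul_eq_mul, RingHom.id_apply]
    ring

theorem isWeaklyProregular_iff_map_ker_le_range (aa : Fin n → A) :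
    IsWeaklyProregular aa ↔ ∀ q i : ℕ, ∃ j : ℕ, i ≤ j ∧
      (ker (koszulDₗ (fun k => aa k ^ j) q)).map (koszulTransitionₗ aa (j - i) (q + 1)) ≤
        range (koszulDₗ (fun k => aa k ^ i) (q + 1)) := by
  simp only [Submodule.map_le_iff_le_comap]
  rfl

variable (A) in
noncomputable def koszulDegBaseChange (B : Type*) [CommRing B] [Algebra A B] (n q : ℕ) :
    B ⊗[A] KoszulDeg A n q ≃ₗ[B] KoszulDeg B n q :=
  TensorProduct.piScalarRight A B B _

variable {B : Type*} [CommRing B] [Algebra A B]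

theorem koszulDegBaseChange_tmul (q : ℕ) (b : B) (w : KoszulDeg A n q) :
    koszulDegBaseChange A B n q (b ⊗ₜ w) = fun s => algebraMap A B (w s) * b := by
  funext s
  simp [koszulDegBaseChange, Algebra.smul_def]

theorem koszulDₗ_algebraMap (a : Fin n → A) (q : ℕ) :
    koszulDₗ (fun k => algebraMap A B (a k)) q =
      (koszulDegBaseChange A B n (q + 1)).arrowCongr (koszulDegBaseChange A B n q)
        ((koszulDₗ a q).baseChange B) := by
  refine LinearMap.ext fun x => ?_
  obtain ⟨t, rfl⟩ := (koszulDegBaseChange A B n (q + 1)).surjective x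
  rw [LinearEquiv.arrowCongr_apply, LinearEquiv.symm_apply_apply]
  induction t using TensorProduct.induction_on with
  | zero => simp only [map_zero]
  | tmul b w =>
    funext s
    simp only [baseChange_tmul, koszulDegBaseChange_tmul]
    simp only [koszulDₗ, LinearMap.coe_mk, AddHom.coe_mk, koszulD, map_sum, Finset.sum_mul,
      map_mul, map_pow, map_neg, map_one]
    exact Finset.sum_congr rfl fun i _ => by ring
  | add x y hx hy => simp only [map_add, hx, hy]

theorem koszulTransitionₗ_algebraMap (a : Fin n → A) (e q : ℕ) :
    koszulTransitionₗ (fun k => algebraMap A B (a k)) e q =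
      (koszulDegBaseChange A B n q).arrowCongr (koszulDegBaseChange A B n q)
        ((koszulTransitionₗ a e q).baseChange B) := by
  refine LinearMap.ext fun x => ?_
  obtain ⟨t, rfl⟩ := (koszulDegBaseChange A B n q).surjective x
  rw [LinearEquiv.arrowCongr_apply, LinearEquiv.symm_apply_apply]
  induction t using TensorProduct.induction_on with
  | zero => simp only [map_zero]
  | tmul b w =>
    funext s
    simp only [baseChange_tmul, koszulDegBaseChange_tmul]
    simp only [koszulTransitionₗ, LinearMap.coe_mk, AddHom.coe_mk, koszulTransition, map_mul,
      map_prod, map_pow]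
    ring
  | add x y hx hy => simp only [map_add, hx, hy]

end Koszul

/-- If `A → B` is a flat ring homomorphism and `(a_1, ..., a_n)` is a weakly
proregular sequence in `A`, then the image sequence in `B` is weakly proregular. -/
theorem isWeaklyProregular_map_of_flat {A B : Type*} [CommRing A] [CommRing B]
    [Algebra A B] [Module.Flat A B] {n : ℕ} (aa : Fin n → A)
    (h : IsWeaklyProregular aa) :
    IsWeaklyProregular (fun k => algebraMap A B (aa k)) := by
  rw [isWeaklyProregular_iff_map_ker_le_range] at h ⊢
  intro q i
  obtain ⟨j, hij, hle⟩ := h q i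
  refine ⟨j, hij, ?_⟩
  simp only [← map_pow, koszulDₗ_algebraMap, koszulTransitionₗ_algebraMap]
  exact LinearEquiv.map_ker_arrowCongr_le_range_arrowCongr _ _ _ _
    (Module.Flat.map_ker_baseChange_le_range_baseChange hle)
end

section
/- If A is a noetherian commutative ring, then every finite sequence of elements of A is weakly proregular. -/
/-!
Induct on the length of the sequence. Write `bb = (b, a)` with `a` the last entry; then
`K(A; bb)` is the mapping cone of `a` acting on `K(A; b)`, and a cocycle `f` of `K(A; bb^j)`
satisfies `d (fst f) = ∓ a^j • snd f`. If the image `snd (μ_{j,i₂} f)` of its second component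
is a coboundary `d h` in `K(A; b^{i₂})`, then `μ_{j,i₂} (fst f) ± a^{i₂} • h` is a cocycle of
`K(A; b^{i₂})`; the pro-zero property of `K(A; b)` from `i₂` down to `i` makes its image a
coboundary `d g₀`, and `μ_{j,i} f` is the coboundary of `pair g₀ (a^{i₂-i} • μ_{i₂,i} h)`.

It remains to find `j` and `h`. In positive degree `snd f` is itself a cocycle, and `h` comes
from the pro-zero property of `K(A; b)` one degree lower. In degree `0`, `snd f` is a scalar `c`
with `a^j c ∈ (b^{i₂})`; as `A` is noetherian the colon ideals `((b^{i₂}) : a^t)` stabilise at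
some `t₀`, so for `j = i₂ + t₀` already `a^{t₀} c ∈ (b^{i₂})`.
-/

open Finset

section Fin

variable {n : ℕ}

theorem Fin.last_notMem_map_castSuccEmb (s : Finset (Fin n)) :
    Fin.last n ∉ s.map Fin.castSuccEmb := by
  simp [Fin.castSucc_ne_last]

theorem Fin.compl_map_castSuccEmb (s : Finset (Fin n)) :
    (s.map Fin.castSuccEmb)ᶜ = insert (Fin.last n) (sᶜ.map Fin.castSuccEmb) := by
  ext x
  induction x using Fin.lastCases <;> simp [Fin.castSucc_ne_last]

theorem Fin.compl_insert_last_map_castSuccEmb (s : Finset (Fin n)) :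
    (insert (Fin.last n) (s.map Fin.castSuccEmb))ᶜ = sᶜ.map Fin.castSuccEmb := by
  ext x
  induction x using Fin.lastCases <;> simp [Fin.castSucc_ne_last]

theorem Fin.card_filter_lt_castSucc_map (s : Finset (Fin n)) (k : Fin n) :
    #{x ∈ s.map Fin.castSuccEmb | x < k.castSucc} = #{x ∈ s | x < k} := by
  rw [filter_map, card_map]
  rfl

theorem Fin.filter_lt_last_map (s : Finset (Fin n)) :
    {x ∈ s.map Fin.castSuccEmb | x < Fin.last n} = s.map Fin.castSuccEmb :=
  filter_true_of_mem fun x hx => by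
    obtain ⟨k, -, rfl⟩ := mem_map.mp hx
    exact Fin.castSucc_lt_last k

theorem Fin.map_castSuccEmb_preimage {s : Finset (Fin (n + 1))} (h : Fin.last n ∉ s) :
    (s.preimage Fin.castSucc (Fin.castSucc_injective n).injOn).map Fin.castSuccEmb = s := by
  ext x
  induction x using Fin.lastCases <;> simp [h]

theorem Fin.insert_last_map_castSuccEmb_preimage {s : Finset (Fin (n + 1))} (h : Fin.last n ∈ s) :
    insert (Fin.last n)
      ((s.preimage Fin.castSucc (Fin.castSucc_injective n).injOn).map Fin.castSuccEmb) = s := by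
  ext x
  induction x using Fin.lastCases <;> simp [h, Fin.castSucc_ne_last]

theorem Fin.preimage_castSucc_map_castSuccEmb (s : Finset (Fin n)) :
    (s.map Fin.castSuccEmb).preimage Fin.castSucc (Fin.castSucc_injective n).injOn = s := by
  ext; simp

theorem Fin.preimage_castSucc_insert_last_map_castSuccEmb (s : Finset (Fin n)) :
    (insert (Fin.last n) (s.map Fin.castSuccEmb)).preimage Fin.castSucc
      (Fin.castSucc_injective n).injOn = s := by
  ext; simp [Fin.castSucc_ne_last]

theorem Fin.init_fun_pow {M : Type*} [Monoid M] (bb : Fin (n + 1) → M) (i : ℕ) :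
    Fin.init (fun k => bb k ^ i) = fun k => Fin.init bb k ^ i :=
  rfl

end Fin

section Koszul

variable {A : Type*} [CommRing A] {n : ℕ}

theorem koszulD_add (aa : Fin n → A) (q : ℕ) (f g : KoszulDeg A n (q + 1)) :
    koszulD aa q (f + g) = koszulD aa q f + koszulD aa q g := by
  ext s
  simp only [koszulD, Pi.add_apply, mul_add, sum_add_distrib]

theorem koszulD_smul (aa : Fin n → A) (q : ℕ) (c : A) (f : KoszulDeg A n (q + 1)) :
    koszulD aa q (c • f) = c • koszulD aa q f := by
  ext s
  simp only [koszulD, Pi.smul_apply, smul_eq_mul, mul_sum]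
  exact sum_congr rfl fun _ _ => by ring

theorem koszulTransition_add (aa : Fin n → A) (e q : ℕ) (f g : KoszulDeg A n q) :
    koszulTransition aa e q (f + g) = koszulTransition aa e q f + koszulTransition aa e q g :=
  funext fun _ => mul_add _ _ _

theorem koszulTransition_smul (aa : Fin n → A) (e q : ℕ) (c : A) (f : KoszulDeg A n q) :
    koszulTransition aa e q (c • f) = c • koszulTransition aa e q f :=
  funext fun _ => mul_left_comm _ _ _

theorem koszulTransition_koszulTransition (aa : Fin n → A) (e e' q : ℕ) (f : KoszulDeg A n q) :
    koszulTransition aa e q (koszulTransition aa e' q f) = koszulTransition aa (e + e') q f := by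
  ext s
  simp only [koszulTransition, pow_add, prod_mul_distrib]
  ring

theorem koszulTransition_zero_deg (aa : Fin n → A) (e : ℕ) (f : KoszulDeg A n 0) :
    koszulTransition aa e 0 f = f := by
  ext s
  simp [koszulTransition, card_eq_zero.mp s.2]

namespace KoszulDeg

noncomputable def extend {m : ℕ} (f : KoszulDeg A n m) (t : Finset (Fin n)) : A :=
  if h : #t = m then f ⟨t, h⟩ else 0

theorem extend_of_card_eq {m : ℕ} (f : KoszulDeg A n m) {t : Finset (Fin n)} (h : #t = m) :
    extend f t = f ⟨t, h⟩ :=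
  dif_pos h

theorem extend_koszulTransition (aa : Fin n → A) (e m : ℕ) (f : KoszulDeg A n m)
    (t : Finset (Fin n)) :
    extend (koszulTransition aa e m f) t = (∏ k ∈ t, aa k ^ e) * extend f t := by
  unfold extend
  split_ifs <;> simp [koszulTransition]

end KoszulDeg

open KoszulDeg

theorem koszulD_apply (aa : Fin n → A) (q : ℕ) (f : KoszulDeg A n (q + 1))
    (s : {s : Finset (Fin n) // #s = q}) :
    koszulD aa q f s =
      ∑ i ∈ s.1ᶜ, (-1 : A) ^ #{k ∈ s.1 | k < i} * aa i * extend f (insert i s.1) := by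
  refine (sum_congr rfl fun i _ => ?_).trans (sum_attach s.1ᶜ _)
  rw [extend_of_card_eq]

theorem koszulD_koszulTransition (aa : Fin n → A) (e i q : ℕ) (f : KoszulDeg A n (q + 1)) :
    koszulD (fun k => aa k ^ i) q (koszulTransition aa e (q + 1) f) =
      koszulTransition aa e q (koszulD (fun k => aa k ^ (i + e)) q f) := by
  ext s
  simp only [koszulD_apply, koszulTransition, mul_sum]
  refine sum_congr rfl fun k hk => ?_
  rw [extend_koszulTransition, prod_insert (mem_compl.mp hk), pow_add]
  ring

namespace KoszulDeg

/-- `K(A; bb)` is the mapping cone of multiplication by `bb (Fin.last n)` on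
`K(A; Fin.init bb)`: `fst` and `snd` are the components indexed by the subsets without and
with `Fin.last n`. -/
noncomputable def fst {q : ℕ} (f : KoszulDeg A (n + 1) q) : KoszulDeg A n q :=
  fun s => f ⟨s.1.map Fin.castSuccEmb, by rw [card_map, s.2]⟩

noncomputable def snd {q : ℕ} (f : KoszulDeg A (n + 1) (q + 1)) : KoszulDeg A n q :=
  fun s => f ⟨insert (Fin.last n) (s.1.map Fin.castSuccEmb), by
    rw [card_insert_of_notMem (Fin.last_notMem_map_castSuccEmb _), card_map, s.2]⟩

noncomputable def pair {q : ℕ} (g₀ : KoszulDeg A n (q + 1)) (g₁ : KoszulDeg A n q) :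
    KoszulDeg A (n + 1) (q + 1) :=
  fun s =>
    let t := s.1.preimage Fin.castSucc (Fin.castSucc_injective n).injOn
    if Fin.last n ∈ s.1 then extend g₁ t else extend g₀ t

@[simp]
theorem fst_pair {q : ℕ} (g₀ : KoszulDeg A n (q + 1)) (g₁ : KoszulDeg A n q) :
    fst (pair g₀ g₁) = g₀ := by
  ext s
  simp [fst, pair, Fin.preimage_castSucc_map_castSuccEmb, extend_of_card_eq _ s.2]

@[simp]
theorem snd_pair {q : ℕ} (g₀ : KoszulDeg A n (q + 1)) (g₁ : KoszulDeg A n q) :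
    snd (pair g₀ g₁) = g₁ := by
  ext s
  simp [snd, pair, Fin.preimage_castSucc_insert_last_map_castSuccEmb, extend_of_card_eq _ s.2]

theorem extend_map_castSuccEmb {q : ℕ} (f : KoszulDeg A (n + 1) q) (t : Finset (Fin n)) :
    extend f (t.map Fin.castSuccEmb) = extend (fst f) t := by
  unfold extend
  simp only [card_map]
  split_ifs <;> rfl

theorem extend_insert_last_map_castSuccEmb {q : ℕ} (f : KoszulDeg A (n + 1) (q + 1))
    (t : Finset (Fin n)) :
    extend f (insert (Fin.last n) (t.map Fin.castSuccEmb)) = extend (snd f) t := by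
  unfold extend
  simp only [card_insert_of_notMem (Fin.last_notMem_map_castSuccEmb _), card_map,
    add_left_inj]
  split_ifs <;> rfl

theorem ext_fst_snd {q : ℕ} {f g : KoszulDeg A (n + 1) (q + 1)}
    (h₀ : fst f = fst g) (h₁ : snd f = snd g) : f = g := by
  ext ⟨s, hs⟩
  rw [← extend_of_card_eq f hs, ← extend_of_card_eq g hs]
  by_cases hl : Fin.last n ∈ s
  · rw [← Fin.insert_last_map_castSuccEmb_preimage hl, extend_insert_last_map_castSuccEmb,
      extend_insert_last_map_castSuccEmb, h₁]
  · rw [← Fin.map_castSuccEmb_preimage hl, extend_map_castSuccEmb, extend_map_castSuccEmb, h₀]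

theorem fst_koszulD (aa : Fin (n + 1) → A) (q : ℕ) (f : KoszulDeg A (n + 1) (q + 1)) :
    fst (koszulD aa q f) =
      koszulD (Fin.init aa) q (fst f) + ((-1 : A) ^ q * aa (Fin.last n)) • snd f := by
  ext s
  rw [Pi.add_apply, Pi.smul_apply, fst, koszulD_apply, koszulD_apply]
  dsimp only
  rw [Fin.compl_map_castSuccEmb,
    sum_insert (Fin.last_notMem_map_castSuccEmb _), sum_map, add_comm]
  congr 1
  · refine sum_congr rfl fun k _ => ?_
    rw [← map_insert, Fin.castSuccEmb_apply, Fin.card_filter_lt_castSucc_map,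
      extend_map_castSuccEmb]
    rfl
  · rw [Fin.filter_lt_last_map, card_map, s.2, extend_insert_last_map_castSuccEmb,
      extend_of_card_eq _ s.2, smul_eq_mul, mul_assoc]

theorem snd_koszulD (aa : Fin (n + 1) → A) (q : ℕ) (f : KoszulDeg A (n + 1) (q + 2)) :
    snd (koszulD aa (q + 1) f) = koszulD (Fin.init aa) q (snd f) := by
  ext s
  rw [snd, koszulD_apply, koszulD_apply]
  dsimp only
  rw [Fin.compl_insert_last_map_castSuccEmb, sum_map]
  refine sum_congr rfl fun k _ => ?_
  rw [insert_comm, ← map_insert, Fin.castSuccEmb_apply, filter_insert,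
    if_neg (Fin.castSucc_lt_last k).not_gt, Fin.card_filter_lt_castSucc_map,
    extend_insert_last_map_castSuccEmb]
  rfl

theorem fst_koszulTransition (aa : Fin (n + 1) → A) (e q : ℕ) (f : KoszulDeg A (n + 1) q) :
    fst (koszulTransition aa e q f) = koszulTransition (Fin.init aa) e q (fst f) := by
  ext s
  simp only [fst, koszulTransition, prod_map]
  rfl

theorem snd_koszulTransition (aa : Fin (n + 1) → A) (e q : ℕ)
    (f : KoszulDeg A (n + 1) (q + 1)) :
    snd (koszulTransition aa e (q + 1) f) =
      aa (Fin.last n) ^ e • koszulTransition (Fin.init aa) e q (snd f) := by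
  ext s
  simp only [snd, koszulTransition, Pi.smul_apply, smul_eq_mul,
    prod_insert (Fin.last_notMem_map_castSuccEmb _), prod_map]
  rw [mul_assoc]
  rfl

end KoszulDeg

open KoszulDeg

/-- The transition map `H^{-(q+1)}(K(A; aa^j)) → H^{-(q+1)}(K(A; aa^i))` is zero. -/
def KoszulTransitionIsZero (aa : Fin n → A) (q i j : ℕ) : Prop :=
  ∀ f : KoszulDeg A n (q + 1), koszulD (fun k => aa k ^ j) q f = 0 →
    ∃ g : KoszulDeg A n (q + 2),
      koszulD (fun k => aa k ^ i) (q + 1) g = koszulTransition aa (j - i) (q + 1) f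

theorem koszulD_fst_of_koszulD_eq_zero {bb : Fin (n + 1) → A} {q j : ℕ}
    {f : KoszulDeg A (n + 1) (q + 1)} (hf : koszulD (fun k => bb k ^ j) q f = 0) :
    koszulD (fun k => Fin.init bb k ^ j) q (fst f) =
      -((-1 : A) ^ q * bb (Fin.last n) ^ j) • snd f := by
  rw [neg_smul, eq_neg_iff_add_eq_zero, ← Fin.init_fun_pow, ← fst_koszulD, hf]
  rfl

/-- The composite of the transition `H^{-(q+1)}(K(A; bb^j)) → H^{-(q+1)}(K(A; bb^i))` with the map
`snd` to `H^{-q}(K(A; (Fin.init bb)^i))` is zero. -/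
def KoszulSndTransitionIsZero (bb : Fin (n + 1) → A) (q i j : ℕ) : Prop :=
  ∀ f : KoszulDeg A (n + 1) (q + 1), koszulD (fun k => bb k ^ j) q f = 0 →
    ∃ h : KoszulDeg A n (q + 1),
      koszulD (fun k => Fin.init bb k ^ i) q h = snd (koszulTransition bb (j - i) (q + 1) f)

theorem koszulTransitionIsZero_of_snd {bb : Fin (n + 1) → A} {q i i₂ j : ℕ}
    (hi : i ≤ i₂) (hj : i₂ ≤ j) (hb : KoszulTransitionIsZero (Fin.init bb) q i i₂)
    (hsnd : KoszulSndTransitionIsZero bb q i₂ j) :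
    KoszulTransitionIsZero bb q i j := by
  intro f hf
  obtain ⟨h, hh⟩ := hsnd f hf
  rw [snd_koszulTransition] at hh
  have hw : koszulD (fun k => Fin.init bb k ^ i₂) q
      (koszulTransition (Fin.init bb) (j - i₂) (q + 1) (fst f) +
        ((-1 : A) ^ q * bb (Fin.last n) ^ i₂) • h) = 0 := by
    rw [koszulD_add, koszulD_smul, koszulD_koszulTransition, Nat.add_sub_cancel' hj,
      koszulD_fst_of_koszulD_eq_zero hf, hh, koszulTransition_smul, smul_smul,
      ← add_smul, mul_assoc, ← pow_add, Nat.add_sub_cancel' hj, neg_add_cancel, zero_smul]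
  obtain ⟨g₀, hg₀⟩ := hb _ hw
  have hji : i₂ - i + (j - i₂) = j - i := by omega
  refine ⟨pair g₀ (bb (Fin.last n) ^ (i₂ - i) •
    koszulTransition (Fin.init bb) (i₂ - i) (q + 1) h), ext_fst_snd ?_ ?_⟩
  · rw [fst_koszulD, Fin.init_fun_pow, fst_pair, snd_pair, hg₀, fst_koszulTransition,
      koszulTransition_add, koszulTransition_koszulTransition, hji, koszulTransition_smul,
      smul_smul, add_assoc, add_eq_left, ← add_smul, mul_assoc _ (_ ^ i), ← pow_add,
      Nat.add_sub_cancel' hi, pow_succ, mul_neg_one, neg_mul, add_neg_cancel,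
      zero_smul]
  · rw [snd_koszulD, Fin.init_fun_pow, snd_pair, koszulD_smul, koszulD_koszulTransition,
      Nat.add_sub_cancel' hi, hh, koszulTransition_smul, koszulTransition_koszulTransition, hji,
      smul_smul, ← pow_add, hji, snd_koszulTransition]

theorem koszulSndTransitionIsZero_succ {bb : Fin (n + 1) → A} {q i j : ℕ}
    (h : KoszulTransitionIsZero (Fin.init bb) q i j) :
    KoszulSndTransitionIsZero bb (q + 1) i j := by
  intro f hf
  obtain ⟨g, hg⟩ := h (snd f) (by rw [← Fin.init_fun_pow, ← snd_koszulD, hf]; rfl)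
  exact ⟨bb (Fin.last n) ^ (j - i) • g, by rw [koszulD_smul, hg, snd_koszulTransition]⟩

theorem Ideal.exists_colon_pow_eq [IsNoetherianRing A] (I : Ideal A) (a : A) :
    ∃ t₀, ∀ t, t₀ ≤ t → I.colon {a ^ t} = I.colon {a ^ t₀} := by
  have hmono : Monotone fun t : ℕ => I.colon {a ^ t} := monotone_nat_of_le_succ fun t x hx => by
    rw [Submodule.mem_colon_singleton, smul_eq_mul] at hx ⊢
    rw [pow_succ, ← mul_assoc]
    exact I.mul_mem_right a hx
  obtain ⟨t₀, ht₀⟩ := monotone_stabilizes_iff_noetherian.mpr ‹IsNoetherianRing A› ⟨_, hmono⟩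
  exact ⟨t₀, fun t ht => (ht₀ t ht).symm⟩

theorem koszulD_zero_apply_mem_span (aa : Fin n → A) (f : KoszulDeg A n 1)
    (s : {s : Finset (Fin n) // #s = 0}) :
    koszulD aa 0 f s ∈ Ideal.span (Set.range aa) :=
  Ideal.sum_mem _ fun i _ =>
    Ideal.mul_mem_right _ _ (Ideal.mul_mem_left _ _ (Ideal.subset_span ⟨i, rfl⟩))

theorem exists_koszulD_zero_eq_of_mem_span {aa : Fin n → A} {c : A}
    (hc : c ∈ Ideal.span (Set.range aa)) :
    ∃ g : KoszulDeg A n 1, koszulD aa 0 g = fun _ => c := by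
  obtain ⟨co, rfl⟩ := (Submodule.mem_span_range_iff_exists_fun A).mp hc
  refine ⟨fun s => ∑ k ∈ s.1, co k, funext fun s => ?_⟩
  rw [koszulD_apply, card_eq_zero.mp s.2]
  refine sum_congr compl_empty fun k _ => ?_
  rw [insert_empty, extend_of_card_eq _ (card_singleton k)]
  simp [mul_comm]

theorem exists_koszulSndTransitionIsZero_zero [IsNoetherianRing A] (bb : Fin (n + 1) → A)
    (i : ℕ) :
    ∃ j, i ≤ j ∧ KoszulSndTransitionIsZero bb 0 i j := by
  set I := Ideal.span (Set.range fun k => Fin.init bb k ^ i)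
  set a := bb (Fin.last n)
  obtain ⟨t, ht⟩ := I.exists_colon_pow_eq a
  refine ⟨i + t, le_add_right le_rfl, fun f hf => ?_⟩
  have hfst : koszulD (fun k => Fin.init bb k ^ i) 0 (koszulTransition (Fin.init bb) t 1 (fst f)) =
      -(a ^ (i + t)) • snd f := by
    rw [koszulD_koszulTransition, koszulTransition_zero_deg, koszulD_fst_of_koszulD_eq_zero hf,
      pow_zero, one_mul]
  set c := snd f ⟨∅, card_empty⟩
  have hc : c * a ^ (i + t) ∈ I := by
    have := koszulD_zero_apply_mem_span (fun k => Fin.init bb k ^ i)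
      (koszulTransition (Fin.init bb) t 1 (fst f)) ⟨∅, card_empty⟩
    rwa [hfst, Pi.smul_apply, smul_eq_mul, neg_mul, neg_mem_iff, mul_comm] at this
  have hc' : c * a ^ t ∈ I := by
    rw [← smul_eq_mul, ← Submodule.mem_colon_singleton, ← ht _ (le_add_self),
      Submodule.mem_colon_singleton]
    exact hc
  obtain ⟨h, hh⟩ := exists_koszulD_zero_eq_of_mem_span hc'
  refine ⟨h, hh.trans (funext fun s => ?_)⟩
  obtain rfl : s = ⟨∅, card_empty⟩ := Subtype.ext (card_eq_zero.mp s.2)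
  rw [snd_koszulTransition, koszulTransition_zero_deg, Nat.add_sub_cancel_left, Pi.smul_apply,
    smul_eq_mul, mul_comm]

theorem IsWeaklyProregular.of_init [IsNoetherianRing A] {bb : Fin (n + 1) → A}
    (hb : IsWeaklyProregular (Fin.init bb)) : IsWeaklyProregular bb := by
  intro q i
  obtain ⟨i₂, hi, hi₂⟩ := hb q i
  obtain ⟨j, hj, hsnd⟩ : ∃ j, i₂ ≤ j ∧ KoszulSndTransitionIsZero bb q i₂ j := by
    cases q with
    | zero => exact exists_koszulSndTransitionIsZero_zero bb i₂
    | succ q =>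
      obtain ⟨j, hj, h⟩ := hb q i₂
      exact ⟨j, hj, koszulSndTransitionIsZero_succ h⟩
  exact ⟨j, hi.trans hj, koszulTransitionIsZero_of_snd hi hj hi₂ hsnd⟩

theorem isWeaklyProregular_fin_zero (aa : Fin 0 → A) : IsWeaklyProregular aa := by
  refine fun q i => ⟨i, le_rfl, fun f _ => ⟨0, funext fun s => ?_⟩⟩
  have := s.2
  simp [eq_empty_of_isEmpty s.1] at this

end Koszul

/-- If `A` is a noetherian commutative ring, then every finite sequence of elements
of `A` is weakly proregular. -/
theorem isWeaklyProregular_of_isNoetherianRing {A : Type*} [CommRing A]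
    [IsNoetherianRing A] {n : ℕ} (aa : Fin n → A) :
    IsWeaklyProregular aa := by
  induction n with
  | zero => exact isWeaklyProregular_fin_zero aa
  | succ n ih => exact (ih (Fin.init aa)).of_init
end

section
/- Let 𝔞 be a finitely generated ideal in a commutative ring A, A_k := A/𝔞^{k+1}, and let {M_k}_{k∈ℕ} be an 𝔞-adic system of A-modules with limit M̂ := lim_{←k} M_k. Then: (1) M̂ is an 𝔞-adically complete A-module; (2) for every k ≥ 0 the canonical homomorphism A_k ⊗_A M̂ → M_k is bijective. -/
/-- The inverse limit of an inverse system `{M_k}` of modules, realized as a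
submodule of the product `∀ k, M k`. -/
def invLimit {A : Type*} [CommRing A] {M : ℕ → Type*}
    [∀ k, AddCommGroup (M k)] [∀ k, Module A (M k)]
    (f : ∀ k, M (k + 1) →ₗ[A] M k) : Submodule A (∀ k, M k) where
  carrier := {x | ∀ k, f k (x (k + 1)) = x k}
  add_mem' hx hy := fun k => by simp [hx k, hy k]
  zero_mem' := fun k => by simp
  smul_mem' c x hx := fun k => by simp [hx k]

/-! The kernels `F k` of the projections `M̂ → M k` form a separated and complete filtration
with `𝔞^(k+1) M̂ ≤ F k ≤ 𝔞^(k+1) M̂ ⊔ F (k+1)`; the second inclusion holds because the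
projections are surjective and `M (k+1) → M k` has kernel `𝔞^(k+1) M (k+1)`. Fix generators
`s` of `𝔞^(k+1)`. An element of `F k` is written as `∑ s • c s` by successive approximation:
at step `j` the remainder lies in `F (k+j)` and is corrected by coefficients in `𝔞^j M̂`, so the
coefficients converge. Hence `F k = 𝔞^(k+1) M̂`, and completeness of `M̂` follows. -/

theorem Ideal.smul_top_eq_bot_of_isScalarTower {A P : Type*} [CommRing A] [AddCommGroup P]
    [Module A P] {I : Ideal A} [Module (A ⧸ I) P] [IsScalarTower A (A ⧸ I) P] :
    I • (⊤ : Submodule A P) = ⊥ := by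
  refine eq_bot_iff.2 <| Submodule.smul_le.2 fun r hr p _ => ?_
  rw [Submodule.mem_bot, ← algebraMap_smul (A ⧸ I) r p, Ideal.Quotient.algebraMap_eq,
    Ideal.Quotient.eq_zero_iff_mem.2 hr, zero_smul]

theorem Submodule.exists_sum_smul_eq_of_mem_span_smul {A N : Type*} [CommRing A]
    [AddCommGroup N] [Module A N] {S : Finset A} {P : Submodule A N} {x : N}
    (hx : x ∈ Ideal.span (S : Set A) • P) :
    ∃ c : A → N, (∀ a, c a ∈ P) ∧ ∑ a ∈ S, a • c a = x := by
  rw [Submodule.span_smul_eq, Submodule.mem_set_smul] at hx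
  obtain ⟨c, hcS, rfl⟩ := hx
  refine ⟨fun a => c a, fun a => (c a).2, ?_⟩
  rw [Finsupp.sum_of_support_subset c hcS _ (fun _ _ => smul_zero _)]
  simp

section Filtration

variable {A N : Type*} [CommRing A] [AddCommGroup N] [Module A N] {𝔞 : Ideal A}
  {F : ℕ → Submodule A N}

theorem exists_sub_sum_smul_mem_succ (hstep : ∀ n, F n ≤ 𝔞 ^ (n + 1) • ⊤ ⊔ F (n + 1))
    {S : Finset A} {k : ℕ} (hS : Ideal.span (S : Set A) = 𝔞 ^ (k + 1)) {j : ℕ} {r : N}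
    (hr : r ∈ F (k + j)) :
    ∃ d : A → N, (∀ a, d a ∈ 𝔞 ^ j • (⊤ : Submodule A N)) ∧
      r - ∑ a ∈ S, a • d a ∈ F (k + j + 1) := by
  obtain ⟨y, hy, z, hz, rfl⟩ := Submodule.mem_sup.1 (hstep _ hr)
  rw [show k + j + 1 = k + 1 + j by omega, pow_add, ← hS, Submodule.mul_smul] at hy
  obtain ⟨d, hd, rfl⟩ := Submodule.exists_sum_smul_eq_of_mem_span_smul hy
  exact ⟨d, hd, by rwa [add_sub_cancel_left]⟩

theorem le_pow_smul_top_of_complete (h𝔞 : 𝔞.FG) (hanti : Antitone F)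
    (hle : ∀ n, 𝔞 ^ (n + 1) • ⊤ ≤ F n) (hstep : ∀ n, F n ≤ 𝔞 ^ (n + 1) • ⊤ ⊔ F (n + 1))
    (hsep : ∀ x, (∀ n, x ∈ F n) → x = 0)
    (hcomplete : ∀ u : ℕ → N, (∀ n, u (n + 1) - u n ∈ F n) → ∃ y, ∀ n, y - u n ∈ F n)
    (k : ℕ) : F k ≤ 𝔞 ^ (k + 1) • ⊤ := by
  intro x hx
  obtain ⟨S, hS⟩ := h𝔞.pow (n := k + 1)
  choose! d hd hsub using fun j r (hr : r ∈ F (k + j)) => exists_sub_sum_smul_mem_succ hstep hS hr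
  obtain ⟨c, hc0, hc_succ⟩ : ∃ c : ℕ → A → N, c 0 = 0 ∧
      ∀ j, c (j + 1) = c j + d j (x - ∑ a ∈ S, a • c j a) :=
    ⟨fun j => Nat.rec 0 (fun i ci => ci + d i (x - ∑ a ∈ S, a • ci a)) j, rfl, fun _ => rfl⟩
  have hc : ∀ j, x - ∑ a ∈ S, a • c j a ∈ F (k + j) := by
    intro j
    induction j with
    | zero => simpa [hc0] using hx
    | succ j ih =>
      rw [hc_succ]
      simp only [Pi.add_apply, smul_add, Finset.sum_add_distrib, ← sub_sub]
      exact hsub j _ ih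
  have hcd : ∀ j a, c (j + 1) a - c j a ∈ 𝔞 ^ j • (⊤ : Submodule A N) := fun j a => by
    simpa [hc_succ] using hd j _ (hc j) a
  choose y hy using fun a => hcomplete (fun j => c (j + 1) a) fun j => hle j (hcd (j + 1) a)
  have hxy : x = ∑ a ∈ S, a • y a := by
    refine sub_eq_zero.1 (hsep _ fun n => ?_)
    have hsplit : x - ∑ a ∈ S, a • y a =
        (x - ∑ a ∈ S, a • c (n + 1) a) - ∑ a ∈ S, a • (y a - c (n + 1) a) := by
      simp only [smul_sub, Finset.sum_sub_distrib]; abel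
    rw [hsplit]
    exact sub_mem (hanti (by omega) (hc (n + 1)))
      (Submodule.sum_mem _ fun a _ => Submodule.smul_mem _ a (hy a n))
  rw [hxy, ← hS]
  exact Submodule.sum_mem _ fun a ha =>
    Submodule.smul_mem_smul (Submodule.subset_span ha) Submodule.mem_top

theorem isAdicComplete_of_forall_pow_succ
    (hsep : ∀ x : N, (∀ n, x ∈ 𝔞 ^ (n + 1) • (⊤ : Submodule A N)) → x = 0)
    (hcomplete : ∀ u : ℕ → N, (∀ n, u (n + 1) - u n ∈ 𝔞 ^ (n + 1) • (⊤ : Submodule A N)) →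
      ∃ y, ∀ n, y - u n ∈ 𝔞 ^ (n + 1) • (⊤ : Submodule A N)) :
    IsAdicComplete 𝔞 N where
  haus' x hx := hsep x fun n => SModEq.zero.1 (hx (n + 1))
  prec' u hu := by
    obtain ⟨y, hy⟩ := hcomplete (fun n => u (n + 1)) fun n =>
      SModEq.sub_mem.1 (hu (Nat.le_succ (n + 1))).symm
    refine ⟨y, fun n => ?_⟩
    cases n with
    | zero => simp
    | succ n => exact SModEq.sub_mem.2 (sub_mem_comm_iff.1 (hy n))

end Filtration

section InvLimit

variable {A : Type*} [CommRing A] {M : ℕ → Type*} [∀ k, AddCommGroup (M k)]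
  [∀ k, Module A (M k)] (f : ∀ k, M (k + 1) →ₗ[A] M k)

abbrev invLimitProj (k : ℕ) : invLimit f →ₗ[A] M k :=
  (LinearMap.proj k).comp (invLimit f).subtype

theorem invLimitProj_apply (k : ℕ) (x : invLimit f) : invLimitProj f k x = x.1 k := rfl

theorem antitone_ker_invLimitProj : Antitone fun k => LinearMap.ker (invLimitProj f k) :=
  antitone_nat_of_succ_le fun k x hx => by
    rw [LinearMap.mem_ker, invLimitProj_apply, ← x.2 k, show x.1 (k + 1) = 0 from hx, map_zero]

theorem eq_zero_of_forall_mem_ker_invLimitProj (x : invLimit f)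
    (hx : ∀ k, x ∈ LinearMap.ker (invLimitProj f k)) : x = 0 :=
  Subtype.ext <| funext hx

theorem exists_sub_mem_ker_invLimitProj (u : ℕ → invLimit f)
    (hu : ∀ n, u (n + 1) - u n ∈ LinearMap.ker (invLimitProj f n)) :
    ∃ y, ∀ n, y - u n ∈ LinearMap.ker (invLimitProj f n) := by
  have hdiag : ∀ n, (u (n + 1)).1 n = (u n).1 n := fun n =>
    sub_eq_zero.1 (LinearMap.mem_ker.1 (hu n))
  refine ⟨⟨fun n => (u n).1 n, fun n => ?_⟩, fun n => ?_⟩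
  · show f n ((u (n + 1)).1 (n + 1)) = (u n).1 n
    rw [(u (n + 1)).2 n, hdiag]
  · exact LinearMap.mem_ker.2 (sub_self _)

noncomputable def liftThrough (hs : ∀ k, Function.Surjective (f k)) {k : ℕ} (m : M k)
    (n : ℕ) : M n :=
  if h : n ≤ k then Nat.decreasingInduction (motive := fun i _ => M i) (fun i _ => f i) m h
  else Nat.leRec (motive := fun i _ => M i) m (fun i _ => Function.surjInv (hs i))
    (le_of_not_ge h)

theorem liftThrough_mem_invLimit (hs : ∀ k, Function.Surjective (f k)) {k : ℕ} (m : M k) :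
    liftThrough f hs m ∈ invLimit f := by
  intro n
  by_cases hn : n + 1 ≤ k
  · rw [liftThrough, dif_pos hn, liftThrough, dif_pos (Nat.le_of_succ_le hn),
      Nat.decreasingInduction_succ_left _ _ hn]
  · have hkn : k ≤ n := by omega
    rw [liftThrough, dif_neg hn, Nat.leRec_succ _ _ hkn, Function.surjInv_eq (hs n)]
    by_cases hnk : n ≤ k
    · obtain rfl : n = k := le_antisymm hnk hkn
      rw [liftThrough, dif_pos hnk, Nat.decreasingInduction_self, Nat.leRec_self]
    · rw [liftThrough, dif_neg hnk]

theorem liftThrough_self (hs : ∀ k, Function.Surjective (f k)) {k : ℕ} (m : M k) :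
    liftThrough f hs m k = m := by
  rw [liftThrough, dif_pos le_rfl, Nat.decreasingInduction_self]

theorem invLimitProj_surjective (hs : ∀ k, Function.Surjective (f k)) (k : ℕ) :
    Function.Surjective (invLimitProj f k) := fun m =>
  ⟨⟨_, liftThrough_mem_invLimit f hs m⟩, liftThrough_self f hs m⟩

variable {𝔞 : Ideal A}

theorem ker_invLimitProj_le_sup (hs : ∀ k, Function.Surjective (f k))
    (hker : ∀ k, LinearMap.ker (f k) = 𝔞 ^ (k + 1) • (⊤ : Submodule A (M (k + 1)))) (n : ℕ) :
    LinearMap.ker (invLimitProj f n) ≤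
      𝔞 ^ (n + 1) • ⊤ ⊔ LinearMap.ker (invLimitProj f (n + 1)) := by
  intro x hx
  have hxn : x.1 (n + 1) ∈ Submodule.map (invLimitProj f (n + 1)) (𝔞 ^ (n + 1) • ⊤) := by
    rw [Submodule.map_smul'', Submodule.map_top,
      LinearMap.range_eq_top.2 (invLimitProj_surjective f hs (n + 1)), ← hker,
      LinearMap.mem_ker, x.2 n]
    exact hx
  obtain ⟨z, hz, hzx⟩ := hxn
  refine Submodule.mem_sup.2 ⟨z, hz, x - z, ?_, add_sub_cancel _ _⟩
  rw [LinearMap.mem_ker, map_sub, hzx, invLimitProj_apply, sub_self]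

theorem pow_smul_top_le_ker_invLimitProj [∀ k, Module (A ⧸ 𝔞 ^ (k + 1)) (M k)]
    [∀ k, IsScalarTower A (A ⧸ 𝔞 ^ (k + 1)) (M k)] (n : ℕ) :
    𝔞 ^ (n + 1) • ⊤ ≤ LinearMap.ker (invLimitProj f n) := by
  refine Submodule.smul_le.2 fun r hr x _ => ?_
  have hrx : r • x.1 n ∈ 𝔞 ^ (n + 1) • (⊤ : Submodule A (M n)) :=
    Submodule.smul_mem_smul hr Submodule.mem_top
  rwa [Ideal.smul_top_eq_bot_of_isScalarTower, Submodule.mem_bot] at hrx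

end InvLimit

/-- Let `𝔞` be a finitely generated ideal of a commutative ring `A`, `A_k := A/𝔞^(k+1)`,
and let `{M_k}` be an `𝔞`-adic system of `A`-modules: each `M_k` is an `A_k`-module,
and each transition map `f k : M_(k+1) → M_k` induces a bijection
`A_k ⊗_{A_(k+1)} M_(k+1) → M_k`, i.e. `f k` is surjective with kernel
`𝔞^(k+1) M_(k+1)`.  Let `M̂ := lim_k M_k`.  Then:
1. `M̂` is an `𝔞`-adically complete `A`-module;
2. for every `k` the canonical homomorphism `A_k ⊗_A M̂ → M_k` is bijective, i.e.
   the projection `M̂ → M_k` is surjective with kernel `𝔞^(k+1) M̂`. -/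
theorem adic_system_limit_complete_and_base_change {A : Type*} [CommRing A]
    (𝔞 : Ideal A) (h𝔞 : 𝔞.FG) {M : ℕ → Type*}
    [∀ k, AddCommGroup (M k)] [∀ k, Module A (M k)]
    [∀ k, Module (A ⧸ 𝔞 ^ (k + 1)) (M k)]
    [∀ k, IsScalarTower A (A ⧸ 𝔞 ^ (k + 1)) (M k)]
    (f : ∀ k, M (k + 1) →ₗ[A] M k)
    (hsys : ∀ k, Function.Surjective (f k) ∧
      LinearMap.ker (f k) = 𝔞 ^ (k + 1) • (⊤ : Submodule A (M (k + 1)))) :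
    IsAdicComplete 𝔞 (invLimit f) ∧
    ∀ k : ℕ, Function.Surjective ((LinearMap.proj k).comp (invLimit f).subtype) ∧
      LinearMap.ker ((LinearMap.proj k).comp (invLimit f).subtype) =
        𝔞 ^ (k + 1) • (⊤ : Submodule A (invLimit f)) := by
  have hs k := (hsys k).1
  have hker k := (hsys k).2
  have hF (k : ℕ) : LinearMap.ker (invLimitProj f k) = 𝔞 ^ (k + 1) • ⊤ :=
    le_antisymm
      (le_pow_smul_top_of_complete h𝔞 (antitone_ker_invLimitProj f)
        (pow_smul_top_le_ker_invLimitProj f) (ker_invLimitProj_le_sup f hs hker)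
        (eq_zero_of_forall_mem_ker_invLimitProj f) (exists_sub_mem_ker_invLimitProj f) k)
      (pow_smul_top_le_ker_invLimitProj f k)
  refine ⟨isAdicComplete_of_forall_pow_succ ?_ ?_, fun k => ⟨invLimitProj_surjective f hs k, hF k⟩⟩
  · simpa only [hF] using eq_zero_of_forall_mem_ker_invLimitProj f
  · simpa only [hF] using exists_sub_mem_ker_invLimitProj f
end

section
/- Let A be a noetherian commutative ring, 𝔞 ⊆ A an ideal, and {M_k}_{k∈ℕ} an 𝔞-adic system of A-modules such that each M_k is a flat A/𝔞^{k+1}-module. Then the inverse limit M̂ := lim_{←k} M_k is a flat A-module. -/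
open Module

namespace Matrix

variable {A : Type*} [CommRing A] {M N : Type*} [AddCommGroup M] [Module A M]
  [AddCommGroup N] [Module A N] {κ ι ν : Type*} [Fintype ι] [Fintype ν]

def smulVec (P : Matrix κ ι A) (d : ι → M) : κ → M := fun i => ∑ j, P i j • d j

theorem smulVec_apply (P : Matrix κ ι A) (d : ι → M) (i : κ) :
    P.smulVec d i = ∑ j, P i j • d j := rfl

theorem smulVec_add (P : Matrix κ ι A) (d e : ι → M) :
    P.smulVec (d + e) = P.smulVec d + P.smulVec e := by
  ext i; simp [smulVec_apply, Finset.sum_add_distrib]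

theorem smulVec_sub (P : Matrix κ ι A) (d e : ι → M) :
    P.smulVec (d - e) = P.smulVec d - P.smulVec e := by
  ext i; simp [smulVec_apply, Finset.sum_sub_distrib, smul_sub]

theorem zero_smulVec (d : ι → M) : (0 : Matrix κ ι A).smulVec d = 0 := by
  ext i; simp [smulVec_apply]

theorem add_smulVec (P Q : Matrix κ ι A) (d : ι → M) :
    (P + Q).smulVec d = P.smulVec d + Q.smulVec d := by
  ext i; simp [smulVec_apply, Finset.sum_add_distrib, add_smul]

theorem smulVec_smulVec (P : Matrix κ ι A) (Q : Matrix ι ν A) (d : ν → M) :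
    P.smulVec (Q.smulVec d) = (P * Q).smulVec d := by
  ext i
  simp only [smulVec_apply, mul_apply, Finset.smul_sum, Finset.sum_smul, mul_smul]
  exact Finset.sum_comm

theorem comp_smulVec (g : M →ₗ[A] N) (P : Matrix κ ι A) (d : ι → M) :
    g ∘ P.smulVec d = P.smulVec (g ∘ d) := by
  ext i; simp [smulVec_apply]

theorem smulVec_eq_zero_of_forall_mem {I : Ideal A} (hM : IsTorsionBySet A M I)
    {P : Matrix κ ι A} (hP : ∀ i j, P i j ∈ I) (d : ι → M) : P.smulVec d = 0 := by
  ext i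
  simp [smulVec_apply, fun j => @hM (d j) ⟨P i j, hP i j⟩]

theorem map_algebraMap_smulVec {B : Type*} [CommRing B] [Module B M] [Algebra A B]
    [IsScalarTower A B M] (P : Matrix κ ι A) (d : ι → M) :
    (P.map (algebraMap A B)).smulVec d = P.smulVec d := by
  ext i; simp [smulVec_apply]

theorem mul_eq_zero_of_range_eq_ker {R : Matrix κ ι A} {G : Matrix ι ν A}
    (hRG : LinearMap.range G.mulVecLin = LinearMap.ker R.mulVecLin) : R * G = 0 := by
  ext i w
  have : G.col w ∈ LinearMap.ker R.mulVecLin := by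
    rw [← hRG, range_mulVecLin]
    exact Submodule.subset_span ⟨w, rfl⟩
  exact congrFun this i

theorem exists_range_mulVecLin_eq_ker [IsNoetherianRing A] (R : Matrix κ ι A) :
    ∃ (m : ℕ) (G : Matrix ι (Fin m) A),
      LinearMap.range G.mulVecLin = LinearMap.ker R.mulVecLin := by
  obtain ⟨m, g, hg⟩ := Submodule.fg_iff_exists_fin_generating_family.mp
    (IsNoetherian.noetherian (LinearMap.ker R.mulVecLin))
  exact ⟨m, of fun j w => g w j, by rw [range_mulVecLin, ← hg]; rfl⟩

end Matrix

open Matrix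

theorem Module.isTorsionBySet_of_isScalarTower {A M : Type*} [CommRing A] [AddCommGroup M]
    [Module A M] (I : Ideal A) [Module (A ⧸ I) M] [IsScalarTower A (A ⧸ I) M] :
    IsTorsionBySet A M I := fun z a => by
  rw [← algebraMap_smul (A ⧸ I), Ideal.Quotient.algebraMap_eq,
    Ideal.Quotient.eq_zero_iff_mem.mpr a.2, zero_smul]

theorem Module.Flat.exists_smulVec_eq_of_smulVec_eq_zero {R M : Type*} [CommRing R]
    [AddCommGroup M] [Module R M] [Flat R M] {κ ι : Type*} [Fintype κ] [Fintype ι]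
    {P : Matrix κ ι R} {d : ι → M} (hd : P.smulVec d = 0) :
    ∃ (k : ℕ) (B : Matrix ι (Fin k) R) (y : Fin k → M), d = B.smulVec y ∧ P * B = 0 := by
  classical
  have hcomp : Fintype.linearCombination R d ∘ₗ Pᵀ.mulVecLin = 0 := by
    ext v
    simp only [LinearMap.comp_apply, mulVecLin_apply, Fintype.linearCombination_apply,
      mulVec, dotProduct, transpose_apply, Finset.sum_smul, LinearMap.zero_apply]
    rw [Finset.sum_comm]
    refine Finset.sum_eq_zero fun i _ => ?_
    simp_rw [mul_comm (P i _), mul_smul, ← Finset.smul_sum, ← smulVec_apply, hd, Pi.zero_apply,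
      smul_zero]
  obtain ⟨k, a, Y, hY, ha⟩ := exists_factorization_of_comp_eq_zero_of_free hcomp
  refine ⟨k, of fun j w => a (Pi.single j 1) w, fun w => Y (Finsupp.single w 1), ?_, ?_⟩
  · ext j
    have := LinearMap.congr_fun hY (Pi.single j 1)
    simp only [LinearMap.comp_apply, Fintype.linearCombination_apply_single, one_smul] at this
    rw [this, smulVec_apply]
    conv_lhs => rw [← Finsupp.univ_sum_single (a (Pi.single j 1))]
    simp_rw [map_sum, ← Finsupp.smul_single_one _ (a _ _), map_smul, of_apply]
  · ext i w
    have := LinearMap.congr_fun ha (Pi.single i 1)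
    simp only [LinearMap.comp_apply, mulVecLin_apply, mulVec_single_one,
      LinearMap.zero_apply] at this
    rw [col_transpose, row, pi_eq_sum_univ' (P i), map_sum] at this
    simpa [mul_apply] using congr($this w)

theorem Module.Flat.exists_smulVec_eq_of_smulVec_eq_zero_of_quotient {A M : Type*} [CommRing A]
    [AddCommGroup M] [Module A M] (I : Ideal A) [Module (A ⧸ I) M] [IsScalarTower A (A ⧸ I) M]
    [Flat (A ⧸ I) M] {κ ι : Type*} [Fintype κ] [Fintype ι] {P : Matrix κ ι A} {d : ι → M}
    (hd : P.smulVec d = 0) :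
    ∃ (k : ℕ) (B : Matrix ι (Fin k) A) (y : Fin k → M),
      d = B.smulVec y ∧ ∀ i w, (P * B) i w ∈ I := by
  obtain ⟨k, B, y, rfl, hPB⟩ := exists_smulVec_eq_of_smulVec_eq_zero (R := A ⧸ I)
    (P := P.map (algebraMap A (A ⧸ I))) (d := d) (by rwa [map_algebraMap_smulVec])
  set B' := B.map (Function.surjInv Ideal.Quotient.mk_surjective)
  have hB' : B'.map (algebraMap A (A ⧸ I)) = B := by
    ext j w
    exact Function.surjInv_eq Ideal.Quotient.mk_surjective _
  refine ⟨k, B', y, by rw [← hB', map_algebraMap_smulVec], fun i w => ?_⟩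
  rw [← Ideal.Quotient.eq_zero_iff_mem, ← Ideal.Quotient.algebraMap_eq]
  simpa [← hB', ← Matrix.map_mul] using congr($hPB i w)

theorem Submodule.mem_ideal_smul_top_pi_iff {A ι : Type*} [CommRing A] [Fintype ι] (I : Ideal A)
    (v : ι → A) : v ∈ I • (⊤ : Submodule A (ι → A)) ↔ ∀ i, v i ∈ I := by
  classical
  refine ⟨fun hv i => ?_, fun hv => ?_⟩
  · exact smul_induction_on hv (fun a ha _ _ => I.mul_mem_right _ ha) fun _ _ => I.add_mem
  · rw [pi_eq_sum_univ' v]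
    exact sum_mem fun i _ => smul_mem_smul (hv i) mem_top

theorem LinearMap.exists_mem_smul_top_sub_mem_ker {A P Q : Type*} [CommRing A]
    [IsNoetherianRing A] [AddCommGroup P] [Module A P] [AddCommGroup Q] [Module A Q]
    [Module.Finite A Q] (𝔞 : Ideal A) (ψ : P →ₗ[A] Q) :
    ∃ c, ∀ n (v : P), ψ v ∈ 𝔞 ^ (n + c) • (⊤ : Submodule A Q) →
      ∃ w ∈ 𝔞 ^ n • (⊤ : Submodule A P), v - w ∈ ker ψ := by
  obtain ⟨c, hc⟩ := Ideal.exists_pow_inf_eq_pow_smul 𝔞 (range ψ)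
  refine ⟨c, fun n v hv => ?_⟩
  have h : ψ v ∈ 𝔞 ^ n • range ψ := by
    have := hc (n + c) (Nat.le_add_left c n) ▸ Submodule.mem_inf.mpr ⟨hv, mem_range_self ψ v⟩
    rw [Nat.add_sub_cancel] at this
    exact Submodule.smul_mono le_rfl inf_le_right this
  rw [← Submodule.map_top, ← Submodule.map_smul''] at h
  obtain ⟨w, hw, hψw⟩ := h
  exact ⟨w, hw, by rw [mem_ker, map_sub, hψw, sub_self]⟩

theorem Matrix.exists_eq_mul_add_of_range_eq_ker {A : Type*} [CommRing A] [IsNoetherianRing A]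
    (𝔞 : Ideal A) {κ ι ν : Type*} [Fintype κ] [Fintype ι] [Fintype ν] {R : Matrix κ ι A}
    {G : Matrix ι ν A} (hRG : LinearMap.range G.mulVecLin = LinearMap.ker R.mulVecLin) :
    ∃ c, ∀ n k (B : Matrix ι (Fin k) A), (∀ i w, (R * B) i w ∈ 𝔞 ^ (n + c)) →
      ∃ (C : Matrix ν (Fin k) A) (E : Matrix ι (Fin k) A),
        B = G * C + E ∧ ∀ j w, E j w ∈ 𝔞 ^ n := by
  obtain ⟨c, hc⟩ := R.mulVecLin.exists_mem_smul_top_sub_mem_ker 𝔞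
  refine ⟨c, fun n k B hB => ?_⟩
  have hcol : ∀ w, ∃ e ∈ 𝔞 ^ n • (⊤ : Submodule A (ι → A)),
      B.col w - e ∈ LinearMap.range G.mulVecLin := by
    intro w
    rw [hRG]
    refine hc n _ ((Submodule.mem_ideal_smul_top_pi_iff _ _).2 fun i => ?_)
    simpa [mulVec, dotProduct, mul_apply] using hB i w
  choose e he u hu using hcol
  refine ⟨of fun j w => u w j, of fun j w => e w j, ?_,
    fun j w => (Submodule.mem_ideal_smul_top_pi_iff _ _).1 (he w) j⟩
  ext j w
  have := congr_fun (hu w) j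
  simp only [mulVecLin_apply, mulVec, dotProduct, Pi.sub_apply, col_apply] at this
  simp [mul_apply, this]

theorem exists_seq_of_forall_exists_lift {X : ℕ → Type*} (φ : ∀ p, X (p + 1) → X p)
    {P : ∀ p, X p → Prop} (h0 : ∃ x, P 0 x)
    (hlift : ∀ p x, P p x → ∃ y, P (p + 1) y ∧ φ p y = x) :
    ∃ s : ∀ p, X p, ∀ p, P p (s p) ∧ φ p (s (p + 1)) = s p := by
  choose g hg using hlift
  let s : ∀ p, {x // P p x} := fun p =>
    Nat.rec ⟨h0.choose, h0.choose_spec⟩ (fun p x => ⟨g p x.1 x.2, (hg p x.1 x.2).1⟩) p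
  exact ⟨fun p => (s p).1, fun p => ⟨(s p).2, (hg p _ _).2⟩⟩

namespace invLimit

variable {A : Type*} [CommRing A] {M : ℕ → Type*} [∀ k, AddCommGroup (M k)]
  [∀ k, Module A (M k)] (f : ∀ k, M (k + 1) →ₗ[A] M k)

def transition {p q : ℕ} (h : p ≤ q) : M q →ₗ[A] M p :=
  Nat.leRecOn h (fun g => g ∘ₗ f _) LinearMap.id

theorem transition_self (p : ℕ) : transition f (le_refl p) = LinearMap.id :=
  Nat.leRecOn_self _

theorem transition_succ {p q : ℕ} (h : p ≤ q) (h' : p ≤ q + 1) :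
    transition f h' = transition f h ∘ₗ f q :=
  Nat.leRecOn_succ h _

theorem transition_trans {p q s : ℕ} (hpq : p ≤ q) (hqs : q ≤ s) (hps : p ≤ s) :
    transition f hps = transition f hpq ∘ₗ transition f hqs := by
  induction s, hqs using Nat.le_induction with
  | base => rw [transition_self, LinearMap.comp_id]
  | succ s hqs ih =>
    rw [transition_succ f (hpq.trans hqs), transition_succ f hqs, ih, LinearMap.comp_assoc]

theorem transition_succ_left {p q : ℕ} (h : p + 1 ≤ q) (h' : p ≤ q) :
    transition f h' = f p ∘ₗ transition f h := by
  rw [transition_trans f p.le_succ h h', transition_succ f le_rfl, transition_self,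
    LinearMap.id_comp]

theorem transition_surjective (hf : ∀ k, Function.Surjective (f k)) {p q : ℕ} (h : p ≤ q) :
    Function.Surjective (transition f h) := by
  induction q, h using Nat.le_induction with
  | base => rw [transition_self]; exact Function.surjective_id
  | succ q hpq ih => rw [transition_succ f hpq]; exact ih.comp (hf q)

theorem transition_apply {x : ∀ k, M k} (hx : x ∈ invLimit f) {p q : ℕ} (h : p ≤ q) :
    transition f h (x q) = x p := by
  induction q, h using Nat.le_induction with
  | base => rw [transition_self, LinearMap.id_apply]
  | succ q hpq ih => rw [transition_succ f hpq, LinearMap.comp_apply, hx q, ih]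

variable {ι ν μ : Type*} [Fintype ν] [Fintype μ] {G : Matrix ι ν A} {H : Matrix ν μ A} {c : ℕ}

theorem exists_lift_of_smulVec_eq (hf : ∀ k, Function.Surjective (f k)) (hGH : G * H = 0)
    (hc : ∀ p (d : ν → M (p + c)), G.smulVec d = 0 →
      ∃ u : μ → M p, transition f (p.le_add_right c) ∘ d = H.smulVec u)
    (x : ι → invLimit f) {p : ℕ} {t : ν → M (p + c)} (ht : G.smulVec t = fun j => (x j).1 (p + c))
    {u : ν → M (p + 1 + c)} (hu : G.smulVec u = fun j => (x j).1 (p + 1 + c)) :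
    ∃ v : ν → M (p + 1 + c), G.smulVec v = (fun j => (x j).1 (p + 1 + c)) ∧
      f p ∘ transition f ((p + 1).le_add_right c) ∘ v = transition f (p.le_add_right c) ∘ t := by
  have hq : p + c ≤ p + 1 + c := by omega
  have hu' : G.smulVec (transition f hq ∘ u) = fun j => (x j).1 (p + c) := by
    rw [← comp_smulVec, hu]
    exact funext fun j => transition_apply f (x j).2 hq
  obtain ⟨u₀, hu₀⟩ := hc p (t - transition f hq ∘ u) (by rw [smulVec_sub, ht, hu', sub_self])
  obtain ⟨u₁, rfl⟩ := (transition_surjective f hf (p.le_add_right c |>.trans hq)).comp_left u₀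
  refine ⟨u + H.smulVec u₁, by rw [smulVec_add, smulVec_smulVec, hGH, zero_smulVec, add_zero, hu],
    ?_⟩
  rw [transition_trans f (p.le_add_right c) hq] at hu₀
  rw [← Function.comp_assoc, ← LinearMap.coe_comp,
    ← transition_succ_left f _ (p.le_add_right c |>.trans hq),
    transition_trans f (p.le_add_right c) hq]
  ext w
  have := congrFun hu₀ w
  simp only [Function.comp_apply, Pi.sub_apply, Pi.add_apply, map_sub, map_add,
    LinearMap.coe_comp, smulVec_apply, map_sum, map_smul] at this ⊢
  rw [← this, add_sub_cancel]

theorem exists_eq_smulVec_of_forall_exists_smulVec_eq (hf : ∀ k, Function.Surjective (f k))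
    (hGH : G * H = 0)
    (hc : ∀ p (d : ν → M (p + c)), G.smulVec d = 0 →
      ∃ u : μ → M p, transition f (p.le_add_right c) ∘ d = H.smulVec u)
    (x : ι → invLimit f) (hx : ∀ p, ∃ z : ν → M p, G.smulVec z = fun j => (x j).1 p) :
    ∃ y : ν → invLimit f, x = G.smulVec y := by
  let IsLiftedSolution : ∀ p, (ν → M p) → Prop := fun p z => ∃ t : ν → M (p + c),
    G.smulVec t = (fun j => (x j).1 (p + c)) ∧ transition f (p.le_add_right c) ∘ t = z
  have hsol : ∀ p z, IsLiftedSolution p z → G.smulVec z = fun j => (x j).1 p := by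
    rintro p _ ⟨t, ht, rfl⟩
    rw [← comp_smulVec, ht]
    exact funext fun j => transition_apply f (x j).2 _
  have hlift : ∀ p z, IsLiftedSolution p z →
      ∃ z', IsLiftedSolution (p + 1) z' ∧ f p ∘ z' = z := by
    rintro p _ ⟨t, ht, rfl⟩
    obtain ⟨u, hu⟩ := hx (p + 1 + c)
    obtain ⟨v, hv, hvt⟩ := exists_lift_of_smulVec_eq f hf hGH hc x ht hu
    exact ⟨_, ⟨v, hv, rfl⟩, hvt⟩
  obtain ⟨t, ht⟩ := hx (0 + c)
  obtain ⟨s, hs⟩ := exists_seq_of_forall_exists_lift (fun p (z : ν → M (p + 1)) => f p ∘ z)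
    ⟨_, t, ht, rfl⟩ hlift
  let y : ν → invLimit f := fun w => ⟨fun p => s p w, fun p => congrFun (hs p).2 w⟩
  refine ⟨y, ?_⟩
  ext j p
  have hy := comp_smulVec (LinearMap.proj p ∘ₗ (invLimit f).subtype) G y
  exact (congrFun (hsol p _ (hs p).1) j).symm.trans (congrFun hy j).symm

variable (𝔞 : Ideal A) [∀ k, Module (A ⧸ 𝔞 ^ (k + 1)) (M k)]
  [∀ k, IsScalarTower A (A ⧸ 𝔞 ^ (k + 1)) (M k)] {κ : Type*} [Fintype κ] [Fintype ι]

theorem exists_transition_comp_eq_smulVec [IsNoetherianRing A]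
    (hflat : ∀ k, Flat (A ⧸ 𝔞 ^ (k + 1)) (M k)) {R : Matrix κ ι A}
    (hRG : LinearMap.range G.mulVecLin = LinearMap.ker R.mulVecLin) :
    ∃ c, ∀ p (d : ι → M (p + c)), R.smulVec d = 0 →
      ∃ z : ν → M p, transition f (p.le_add_right c) ∘ d = G.smulVec z := by
  obtain ⟨c, hc⟩ := exists_eq_mul_add_of_range_eq_ker 𝔞 hRG
  refine ⟨c, fun p d hd => ?_⟩
  obtain ⟨k, B, y, rfl, hB⟩ :=
    Flat.exists_smulVec_eq_of_smulVec_eq_zero_of_quotient (𝔞 ^ (p + c + 1)) hd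
  obtain ⟨C, E, rfl, hE⟩ := hc (p + 1) k B (by simpa only [add_right_comm] using hB)
  refine ⟨C.smulVec (transition f (p.le_add_right c) ∘ y), ?_⟩
  rw [comp_smulVec, add_smulVec, smulVec_eq_zero_of_forall_mem
    (isTorsionBySet_of_isScalarTower _) hE, add_zero, smulVec_smulVec]

theorem exists_eq_smulVec_of_smulVec_eq_zero [IsNoetherianRing A]
    (hflat : ∀ k, Flat (A ⧸ 𝔞 ^ (k + 1)) (M k)) (hf : ∀ k, Function.Surjective (f k))
    {R : Matrix κ ι A} (hRG : LinearMap.range G.mulVecLin = LinearMap.ker R.mulVecLin)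
    (x : ι → invLimit f) (hx : R.smulVec x = 0) : ∃ y : ν → invLimit f, x = G.smulVec y := by
  obtain ⟨c₁, hc₁⟩ := exists_transition_comp_eq_smulVec f 𝔞 hflat hRG
  obtain ⟨m, H, hGH⟩ := G.exists_range_mulVecLin_eq_ker
  obtain ⟨c₂, hc₂⟩ := exists_transition_comp_eq_smulVec f 𝔞 hflat hGH
  refine exists_eq_smulVec_of_forall_exists_smulVec_eq f hf (mul_eq_zero_of_range_eq_ker hGH)
    hc₂ x fun p => ?_
  have hxp : R.smulVec (fun j => (x j).1 (p + c₁)) = 0 := by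
    have := comp_smulVec (LinearMap.proj (p + c₁) ∘ₗ (invLimit f).subtype) R x
    rw [hx] at this
    exact this.symm
  obtain ⟨z, hz⟩ := hc₁ p _ hxp
  exact ⟨z, hz.symm.trans (funext fun j => transition_apply f (x j).2 _)⟩

end invLimit

/-- Let `A` be a noetherian commutative ring, `𝔞 ⊆ A` an ideal, `A_k := A/𝔞^(k+1)`,
and let `{M_k}` be a flat `𝔞`-adic system of `A`-modules: each `M_k` is a flat
`A_k`-module, and each transition map `f k : M_(k+1) → M_k` induces a bijection
`A_k ⊗_{A_(k+1)} M_(k+1) → M_k`, i.e. `f k` is surjective with kernel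
`𝔞^(k+1) M_(k+1)`.  Then the inverse limit `M̂ := lim_k M_k` is a flat
`A`-module. -/
theorem flat_of_limit_of_flat_adic_system {A : Type*} [CommRing A]
    [IsNoetherianRing A] (𝔞 : Ideal A) {M : ℕ → Type*}
    [∀ k, AddCommGroup (M k)] [∀ k, Module A (M k)]
    [∀ k, Module (A ⧸ 𝔞 ^ (k + 1)) (M k)]
    [∀ k, IsScalarTower A (A ⧸ 𝔞 ^ (k + 1)) (M k)]
    (hflat : ∀ k, Module.Flat (A ⧸ 𝔞 ^ (k + 1)) (M k))
    (f : ∀ k, M (k + 1) →ₗ[A] M k)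
    (hsys : ∀ k, Function.Surjective (f k) ∧
      LinearMap.ker (f k) = 𝔞 ^ (k + 1) • (⊤ : Submodule A (M (k + 1)))) :
    Module.Flat A (invLimit f) := by
  refine Flat.of_forall_isTrivialRelation fun {l b x} hbx => ?_
  obtain ⟨m, G, hG⟩ := (of fun (_ : Fin 1) => b).exists_range_mulVecLin_eq_ker
  obtain ⟨y, rfl⟩ := invLimit.exists_eq_smulVec_of_smulVec_eq_zero f 𝔞 hflat
    (fun k => (hsys k).1) hG x (funext fun _ => hbx)
  exact ⟨m, G, y, fun _ => rfl, fun w => congrFun₂ (mul_eq_zero_of_range_eq_ker hG) 0 w⟩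
end

section
/- Let A be a noetherian commutative ring and 𝔞 ⊆ A an ideal. If M is an 𝔞-adically complete A-module that is 𝔞-adically flat (i.e., Tor_q^A(N, M) = 0 for all 𝔞-torsion modules N and all q > 0), then M is a flat A-module. -/
/-!
By Artin–Rees, `𝔞`-adic flatness makes `- ⊗ M` compatible with the `𝔞`-adic filtrations of
finite modules: if `E ⊆ V` are finite, an element of `E ⊗ M` whose image in `V ⊗ M` lies in
`𝔞^(n+c) (V ⊗ M)` already lies in `𝔞^n (E ⊗ M)`. Indeed it comes from `(E ∩ 𝔞^(n+c) V) ⊗ M`,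
because `E / (E ∩ 𝔞^(n+c) V) → V / 𝔞^(n+c) V` stays injective after tensoring with `M`, its
cokernel being `𝔞`-torsion. Applied to a presentation of a finite module `V`, this exhibits
`V ⊗ M` as the quotient of the complete module `Mʳ` by a closed submodule, so `V ⊗ M` is
`𝔞`-adically separated. For an ideal `J`, the kernel of `J ⊗ M → M` lies in every
`𝔞^n (J ⊗ M)`, hence vanishes.
-/

open CategoryTheory Limits MonoidalCategory TensorProduct LinearMap

universe u

theorem LinearMap.lTensor_rTensor_comm_apply {R M N P Q : Type*} [CommRing R]
    [AddCommGroup M] [Module R M] [AddCommGroup N] [Module R N] [AddCommGroup P] [Module R P]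
    [AddCommGroup Q] [Module R Q] (f : M →ₗ[R] P) (g : N →ₗ[R] Q) (z : M ⊗[R] N) :
    lTensor P g (rTensor N f z) = rTensor Q f (lTensor M g z) := by
  rw [← LinearMap.comp_apply, lTensor_comp_rTensor, ← rTensor_comp_lTensor, LinearMap.comp_apply]

theorem rTensor_injective_of_exact_lTensor {R M K L Q X₀ X₁ X₂ : Type*} [CommRing R]
    [AddCommGroup M] [Module R M] [AddCommGroup K] [Module R K] [AddCommGroup L] [Module R L]
    [AddCommGroup Q] [Module R Q] [AddCommGroup X₀] [Module R X₀] [Module.Flat R X₀]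
    [AddCommGroup X₁] [Module R X₁] [AddCommGroup X₂] [Module R X₂]
    {d₁ : X₁ →ₗ[R] X₀} {d₂ : X₂ →ₗ[R] X₁} {π : X₀ →ₗ[R] M} (hπ : Function.Surjective π)
    (hd₁π : Function.Exact d₁ π) (hd : d₁ ∘ₗ d₂ = 0)
    {f : K →ₗ[R] L} {g : L →ₗ[R] Q} (hf : Function.Injective f) (hfg : Function.Exact f g)
    (hg : Function.Surjective g) (hQ : Function.Exact (lTensor Q d₂) (lTensor Q d₁)) :
    Function.Injective (rTensor M f) := by
  refine (injective_iff_map_eq_zero _).2 fun x hx => ?_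
  obtain ⟨x₀, rfl⟩ := lTensor_surjective K hπ x
  obtain ⟨y₁, hy₁⟩ := (lTensor_exact L hd₁π hπ (rTensor X₀ f x₀)).1 <| by
    rw [lTensor_rTensor_comm_apply, hx]
  obtain ⟨z₂, hz₂⟩ := (hQ (rTensor X₁ g y₁)).1 <| by
    rw [lTensor_rTensor_comm_apply, hy₁, ← LinearMap.comp_apply, ← rTensor_comp,
      hfg.linearMap_comp_eq_zero, rTensor_zero, LinearMap.zero_apply]
  obtain ⟨y₂, rfl⟩ := rTensor_surjective X₂ hg z₂
  obtain ⟨x₁, hx₁⟩ := (rTensor_exact X₁ hfg hg (y₁ - lTensor L d₂ y₂)).1 <| by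
    rw [map_sub, ← lTensor_rTensor_comm_apply, hz₂, sub_self]
  have hx₀ : lTensor K d₁ x₁ = x₀ := by
    apply Module.Flat.rTensor_preserves_injective_linearMap f hf
    rw [← lTensor_rTensor_comm_apply, hx₁, map_sub, hy₁, ← LinearMap.comp_apply, ← lTensor_comp, hd,
      lTensor_zero, LinearMap.zero_apply, sub_zero]
  rw [← hx₀, ← LinearMap.comp_apply, ← lTensor_comp, hd₁π.linearMap_comp_eq_zero, lTensor_zero,
    LinearMap.zero_apply]

theorem exact_lTensor_d_of_isZero_tor_one {A : Type u} [CommRing A] {M Q : Type u}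
    [AddCommGroup M] [Module A M] [AddCommGroup Q] [Module A Q]
    (P : ProjectiveResolution (ModuleCat.of A M))
    (hTor : IsZero (((Tor (ModuleCat.{u} A) 1).obj (ModuleCat.of A Q)).obj (ModuleCat.of A M))) :
    Function.Exact (lTensor Q (P.complex.d 2 1).hom) (lTensor Q (P.complex.d 1 0).hom) := by
  set F := (tensoringLeft (ModuleCat.{u} A)).obj (ModuleCat.of A Q)
  have hH : IsZero ((HomologicalComplex.homologyFunctor _ _ 1).obj
      ((F.mapHomologicalComplex _).obj P.complex)) :=
    hTor.of_iso (P.isoLeftDerivedObj F 1).symm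
  have hexact := (HomologicalComplex.exactAt_iff' _ 2 1 0 (by simp) (by simp)).1
    ((HomologicalComplex.exactAt_iff_isZero_homology _ _).2 hH)
  rw [ShortComplex.moduleCat_exact_iff_range_eq_ker] at hexact
  exact LinearMap.exact_iff.2 hexact.symm

theorem rTensor_injective_of_isZero_tor_one {A : Type u} [CommRing A] {M K L Q : Type u}
    [AddCommGroup M] [Module A M] [AddCommGroup K] [Module A K] [AddCommGroup L] [Module A L]
    [AddCommGroup Q] [Module A Q] {f : K →ₗ[A] L} {g : L →ₗ[A] Q}
    (hf : Function.Injective f) (hfg : Function.Exact f g) (hg : Function.Surjective g)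
    (hTor : IsZero (((Tor (ModuleCat.{u} A) 1).obj (ModuleCat.of A Q)).obj (ModuleCat.of A M))) :
    Function.Injective (rTensor M f) := by
  obtain ⟨P⟩ : Nonempty (ProjectiveResolution (ModuleCat.of A M)) := HasProjectiveResolution.out
  have : Module.Flat A (P.complex.X 0) :=
    have := (IsProjective.iff_projective _).2 (P.projective 0)
    inferInstance
  have hπ := (ModuleCat.epi_iff_surjective _).1 (inferInstance : Epi (P.π.f 0))
  have hd₁π : Function.Exact (P.complex.d 1 0).hom (P.π.f 0).hom :=
    LinearMap.exact_iff.2 ((ShortComplex.moduleCat_exact_iff_range_eq_ker _).1 P.exact₀).symm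
  exact rTensor_injective_of_exact_lTensor hπ hd₁π
    (congrArg ModuleCat.Hom.hom (P.complex.d_comp_d 2 1 0)) hf hfg hg
    (exact_lTensor_d_of_isZero_tor_one P hTor)

theorem Module.IsTorsionBySet.rTensor {A N : Type*} (M : Type*) [CommRing A] [AddCommGroup N]
    [Module A N] [AddCommGroup M] [Module A M] {s : Set A} (h : IsTorsionBySet A N s) :
    IsTorsionBySet A (N ⊗[A] M) s := fun t a => by
  induction t using TensorProduct.induction_on with
  | zero => exact smul_zero _
  | tmul n m => rw [smul_tmul', h, zero_tmul]
  | add t t' ht ht' => rw [smul_add, ht, ht', add_zero]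

theorem smul_top_le_ker_rTensor_mkQ {A V : Type*} (M : Type*) [CommRing A] [AddCommGroup V]
    [Module A V] [AddCommGroup M] [Module A M] (I : Ideal A) :
    (I • ⊤ : Submodule A (V ⊗[A] M)) ≤ ker (rTensor M (I • ⊤ : Submodule A V).mkQ) :=
  Submodule.smul_le.2 fun a ha t _ => by
    rw [mem_ker, map_smul]
    exact (Module.isTorsionBySet_quotient_ideal_smul V I).rTensor M (a := ⟨a, ha⟩)

theorem range_rTensor_le_smul_top {A N P : Type*} (M : Type*) [CommRing A] [AddCommGroup N]
    [Module A N] [AddCommGroup P] [Module A P] [AddCommGroup M] [Module A M] {I : Ideal A}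
    {f : N →ₗ[A] P} (hf : range f ≤ I • ⊤) : range (rTensor M f) ≤ I • ⊤ := by
  rintro _ ⟨t, rfl⟩
  induction t using TensorProduct.induction_on with
  | zero => simp
  | tmul n m =>
    exact Submodule.smul_top_le_comap_smul_top I ((TensorProduct.mk A P M).flip m) (hf ⟨n, rfl⟩)
  | add t t' ht ht' => rw [map_add]; exact add_mem ht ht'

section AdicTopology

variable {A : Type*} [CommRing A] {I : Ideal A} {N P : Type*} [AddCommGroup N] [Module A N]
  [AddCommGroup P] [Module A P]

theorem Submodule.mem_smul_top_pi_iff {ι : Type*} [Finite ι] {M : ι → Type*}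
    [∀ i, AddCommGroup (M i)] [∀ i, Module A (M i)] {x : ∀ i, M i} :
    x ∈ (I • ⊤ : Submodule A (∀ i, M i)) ↔ ∀ i, x i ∈ (I • ⊤ : Submodule A (M i)) := by
  classical
  cases nonempty_fintype ι
  refine ⟨fun hx i => smul_top_le_comap_smul_top I (LinearMap.proj i) hx, fun hx => ?_⟩
  rw [← Finset.univ_sum_single x]
  exact sum_mem fun i _ => smul_top_le_comap_smul_top I (LinearMap.single A M i) (hx i)

instance IsHausdorff.pi {ι : Type*} [Finite ι] {M : ι → Type*} [∀ i, AddCommGroup (M i)]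
    [∀ i, Module A (M i)] [∀ i, IsHausdorff I (M i)] : IsHausdorff I (∀ i, M i) where
  haus' x hx := _root_.funext fun i => IsHausdorff.haus' (I := I) (x i) fun n =>
    SModEq.sub_mem.2 (Submodule.mem_smul_top_pi_iff.1 (SModEq.sub_mem.1 (hx n)) i)

instance IsPrecomplete.pi {ι : Type*} [Finite ι] {M : ι → Type*} [∀ i, AddCommGroup (M i)]
    [∀ i, Module A (M i)] [∀ i, IsPrecomplete I (M i)] : IsPrecomplete I (∀ i, M i) where
  prec' f hf := by
    choose L hL using fun i => IsPrecomplete.prec (I := I) (f := fun n => f n i) inferInstance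
      fun hmn => SModEq.sub_mem.2 (Submodule.mem_smul_top_pi_iff.1 (SModEq.sub_mem.1 (hf hmn)) i)
    exact ⟨L, fun n => SModEq.sub_mem.2 <|
      Submodule.mem_smul_top_pi_iff.2 fun i => SModEq.sub_mem.1 (hL i n)⟩

theorem IsHausdorff.of_linearEquiv [IsHausdorff I N] (e : N ≃ₗ[A] P) : IsHausdorff I P where
  haus' x hx := e.symm.injective <| (map_zero e.symm).symm ▸
    IsHausdorff.haus' (I := I) _ fun n => SModEq.sub_mem.2 <| by
      rw [sub_zero]
      exact Submodule.smul_top_le_comap_smul_top _ e.symm.toLinearMap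
        (by simpa using SModEq.sub_mem.1 (hx n))

theorem IsPrecomplete.exists_sub_mem_map_pow_smul_top [IsPrecomplete I N] (f : N →ₗ[A] P)
    {g : ℕ → P} (hg₀ : g 0 ∈ range f)
    (hg : ∀ n, g (n + 1) - g n ∈ (I ^ n • ⊤ : Submodule A N).map f) :
    ∃ y, ∀ n, g n - f y ∈ (I ^ n • ⊤ : Submodule A N).map f := by
  obtain ⟨x₀, hx₀⟩ := hg₀
  choose d hd hfd using hg
  set x : ℕ → N := fun n => x₀ + ∑ k ∈ Finset.range n, d k
  have hx : ∀ n, x (n + 1) - x n = d n := fun n => by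
    simp only [x, Finset.sum_range_succ]
    abel
  have hfx : ∀ n, f (x n) = g n := fun n => by
    induction n with
    | zero => simpa [x] using hx₀
    | succ n ih => rw [← sub_add_cancel (x (n + 1)) (x n), map_add, hx, hfd, ih, sub_add_cancel]
  obtain ⟨y, hy⟩ := IsPrecomplete.prec ‹_› <| (AdicCompletion.isAdicCauchy_iff I N x).2 fun n =>
    (SModEq.sub_mem.2 (by rw [hx]; exact hd n)).symm
  exact ⟨y, fun n => ⟨x n - y, SModEq.sub_mem.1 (hy n), by rw [map_sub, hfx]⟩⟩

theorem IsPrecomplete.of_surjective [IsPrecomplete I N] (f : N →ₗ[A] P)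
    (hf : Function.Surjective f) : IsPrecomplete I P where
  prec' g hg := by
    have hmap : ∀ n, (I ^ n • ⊤ : Submodule A N).map f = I ^ n • ⊤ := fun n => by
      rw [Submodule.map_smul'', Submodule.map_top, range_eq_top.2 hf]
    obtain ⟨y, hy⟩ := IsPrecomplete.exists_sub_mem_map_pow_smul_top f (hf (g 0)) fun n => by
      rw [hmap]
      exact SModEq.sub_mem.1 (hg n.le_succ).symm
    exact ⟨f y, fun n => SModEq.sub_mem.2 (hmap n ▸ hy n)⟩

theorem mem_range_of_forall_mem_range_sup_pow_smul_top [IsPrecomplete I N] [IsHausdorff I P]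
    (ψ : N →ₗ[A] P) (c : ℕ)
    (hψ : ∀ n, range ψ ⊓ I ^ (n + c) • ⊤ ≤ (I ^ n • ⊤ : Submodule A N).map ψ) {x : P}
    (hx : ∀ n, x ∈ range ψ ⊔ (I ^ n • ⊤ : Submodule A P)) : x ∈ range ψ := by
  have happrox : ∀ n, ∃ u, x - ψ u ∈ (I ^ (n + c) • ⊤ : Submodule A P) := fun n => by
    obtain ⟨_, ⟨u, rfl⟩, z, hz, hxz⟩ := Submodule.mem_sup.1 (hx (n + c))
    exact ⟨u, by rwa [← hxz, add_sub_cancel_left]⟩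
  choose u hu using happrox
  obtain ⟨y, hy⟩ := IsPrecomplete.exists_sub_mem_map_pow_smul_top ψ (g := fun n => ψ (u n))
    ⟨u 0, rfl⟩ fun n => hψ n ⟨⟨u (n + 1) - u n, map_sub ..⟩, by
      rw [← sub_sub_sub_cancel_left _ _ x]
      exact sub_mem (hu n) (Submodule.pow_smul_top_le I P (by omega) (hu (n + 1)))⟩
  refine ⟨y, (sub_eq_zero.1 (IsHausdorff.haus' (I := I) (x - ψ y) fun n => ?_)).symm⟩
  rw [SModEq.sub_mem, sub_zero, ← sub_add_sub_cancel x (ψ (u n))]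
  exact add_mem (Submodule.pow_smul_top_le I P (by omega) (hu n))
    (Submodule.map_le_iff_le_comap.2 (Submodule.smul_top_le_comap_smul_top _ ψ) (hy n))

theorem isPrecomplete_rTensor {V M : Type*} [AddCommGroup V] [Module A V] [Module.Finite A V]
    [AddCommGroup M] [Module A M] [IsPrecomplete I M] : IsPrecomplete I (V ⊗[A] M) := by
  obtain ⟨s, p, hp⟩ := Module.Finite.exists_fin' A V
  let e := (piScalarRight A A M (Fin s)).symm ≪≫ₗ TensorProduct.comm A M (Fin s → A)
  exact .of_surjective (rTensor M p ∘ₗ e.toLinearMap)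
    ((rTensor_surjective M hp).comp e.surjective)

end AdicTopology

def TorOneVanishesOnTorsion {A : Type u} [CommRing A] (𝔞 : Ideal A) (M : Type u)
    [AddCommGroup M] [Module A M] : Prop :=
  ∀ (N : Type u) [AddCommGroup N] [Module A N], (∀ x : N, ∃ k : ℕ, ∀ r ∈ 𝔞 ^ k, r • x = 0) →
    IsZero (((Tor (ModuleCat.{u} A) 1).obj (ModuleCat.of A N)).obj (ModuleCat.of A M))

section AdicallyFlat

variable {A : Type u} [CommRing A] {𝔞 : Ideal A} {M : Type u} [AddCommGroup M] [Module A M]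

theorem TorOneVanishesOnTorsion.mem_range_rTensor_inclusion {V : Type u} [AddCommGroup V]
    [Module A V] (hM : TorOneVanishesOnTorsion 𝔞 M) (E : Submodule A V) (n : ℕ)
    {x : E ⊗[A] M} (hx : rTensor M E.subtype x ∈ (𝔞 ^ n • ⊤ : Submodule A (V ⊗[A] M))) :
    x ∈ range (rTensor M (Submodule.inclusion (inf_le_left : E ⊓ 𝔞 ^ n • ⊤ ≤ E))) := by
  set ι := Submodule.inclusion (inf_le_left : E ⊓ 𝔞 ^ n • ⊤ ≤ E)
  -- `E / (E ∩ 𝔞ⁿV) ↪ V / 𝔞ⁿV` has `𝔞ⁿ`-torsion cokernel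
  let f := (range ι).liftQ ((𝔞 ^ n • ⊤ : Submodule A V).mkQ ∘ₗ E.subtype) <| by
    rintro _ ⟨t, rfl⟩
    exact (Submodule.Quotient.mk_eq_zero _).2 t.2.2
  have hf : Function.Injective f := by
    refine ker_eq_bot.1 (Submodule.ker_liftQ_eq_bot _ _ _ fun e he => ⟨⟨e, e.2, ?_⟩, rfl⟩)
    simpa using he
  have hcoker := (Module.isTorsionBySet_quotient_ideal_smul V (𝔞 ^ n)).quotient (range f)
  have hinj := rTensor_injective_of_isZero_tor_one (M := M) hf (exact_map_mkQ_range f)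
    (Submodule.mkQ_surjective _) (hM _ fun z => ⟨n, fun r hr => hcoker (a := ⟨r, hr⟩)⟩)
  refine (rTensor_exact M (exact_map_mkQ_range ι) (Submodule.mkQ_surjective _) x).1 ?_
  apply hinj
  rw [map_zero, ← LinearMap.comp_apply, ← rTensor_comp, Submodule.liftQ_mkQ, rTensor_comp,
    LinearMap.comp_apply]
  exact smul_top_le_ker_rTensor_mkQ M _ hx

theorem TorOneVanishesOnTorsion.exists_mem_pow_smul_top_of_rTensor_subtype_mem
    [IsNoetherianRing A] {V : Type u} [AddCommGroup V] [Module A V] [Module.Finite A V]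
    (hM : TorOneVanishesOnTorsion 𝔞 M) (E : Submodule A V) :
    ∃ c, ∀ n {x : E ⊗[A] M}, rTensor M E.subtype x ∈ (𝔞 ^ (n + c) • ⊤ : Submodule A (V ⊗[A] M)) →
      x ∈ (𝔞 ^ n • ⊤ : Submodule A (E ⊗[A] M)) := by
  obtain ⟨c, hc⟩ := Ideal.exists_pow_inf_eq_pow_smul 𝔞 E
  refine ⟨c, fun n x hx => range_rTensor_le_smul_top M ?_ (hM.mem_range_rTensor_inclusion E _ hx)⟩
  rintro _ ⟨⟨v, hvE, hv⟩, rfl⟩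
  have hv' : v ∈ 𝔞 ^ (n + c) • ⊤ ⊓ E := ⟨hv, hvE⟩
  rw [hc _ le_add_self, Nat.add_sub_cancel] at hv'
  exact (Submodule.mem_smul_top_iff _ _ _).2 (Submodule.smul_mono le_rfl inf_le_right hv')

theorem TorOneVanishesOnTorsion.isHausdorff_rTensor [IsNoetherianRing A] [IsAdicComplete 𝔞 M]
    (hM : TorOneVanishesOnTorsion 𝔞 M) (V : Type u) [AddCommGroup V] [Module A V]
    [Module.Finite A V] : IsHausdorff 𝔞 (V ⊗[A] M) := by
  obtain ⟨r, p, hp⟩ := Module.Finite.exists_fin' A V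
  have : IsHausdorff 𝔞 ((Fin r → A) ⊗[A] M) :=
    .of_linearEquiv ((piScalarRight A A M (Fin r)).symm ≪≫ₗ TensorProduct.comm A M (Fin r → A))
  have : IsPrecomplete 𝔞 (ker p ⊗[A] M) := isPrecomplete_rTensor
  have hexact := rTensor_exact M (exact_subtype_ker_map p) hp
  obtain ⟨c, hc⟩ := hM.exists_mem_pow_smul_top_of_rTensor_subtype_mem (ker p)
  refine ⟨fun y hy => ?_⟩
  obtain ⟨z, rfl⟩ := rTensor_surjective M hp y
  obtain ⟨t, rfl⟩ : z ∈ range (rTensor M (ker p).subtype) := by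
    refine mem_range_of_forall_mem_range_sup_pow_smul_top (I := 𝔞)
      (N := ker p ⊗[A] M) (P := (Fin r → A) ⊗[A] M) (rTensor M (ker p).subtype) c ?_ fun n => ?_
    · rintro n _ ⟨⟨t, rfl⟩, ht⟩
      exact ⟨t, hc n ht, rfl⟩
    · have hz : z ∈ (𝔞 ^ n • ⊤ : Submodule A _).comap (rTensor M p) := by
        simpa using SModEq.sub_mem.1 (hy n)
      rwa [Submodule.comap_smul_top_of_surjective _ _ (rTensor_surjective M hp),
        LinearMap.exact_iff.1 hexact, sup_comm] at hz
  exact hexact.apply_apply_eq_zero t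

end AdicallyFlat

/-- If `A` is a noetherian commutative ring, `𝔞 ⊆ A` an ideal, and `M` an
`𝔞`-adically complete `A`-module which is `𝔞`-adically flat
(`Tor_q^A(N, M) = 0` for every `𝔞`-torsion module `N` and every `q > 0`),
then `M` is a flat `A`-module. -/
theorem flat_of_adically_complete_adically_flat {A : Type u} [CommRing A]
    [IsNoetherianRing A] (𝔞 : Ideal A)
    (M : Type u) [AddCommGroup M] [Module A M]
    (hcomplete : IsAdicComplete 𝔞 M)
    (hflat : ∀ (N : Type u) [AddCommGroup N] [Module A N],
      (∀ x : N, ∃ k : ℕ, ∀ r ∈ 𝔞 ^ k, r • x = 0) →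
      ∀ q : ℕ, 0 < q →
        Limits.IsZero (((Tor (ModuleCat.{u} A) q).obj
          (ModuleCat.of A N)).obj (ModuleCat.of A M))) :
    Module.Flat A M := by
  have hM : TorOneVanishesOnTorsion 𝔞 M := fun N _ _ hN => hflat N hN 1 one_pos
  refine Module.Flat.iff_rTensor_injective'.2 fun J =>
    (injective_iff_map_eq_zero _).2 fun x hx => ?_
  have := hM.isHausdorff_rTensor J
  obtain ⟨c, hc⟩ := hM.exists_mem_pow_smul_top_of_rTensor_subtype_mem J
  refine IsHausdorff.haus' (I := 𝔞) x fun n => SModEq.sub_mem.2 ?_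
  rw [sub_zero]
  exact hc n (by rw [hx]; exact zero_mem _)
end
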